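/- arXiv:1106.5703 — 4 statements merged into one kernel-verified Lean document; each statement's English description precedes it below -/
import Mathlib

section
/- If 0 < q < 1, E[D_1] = μ < ∞, E[p_1·1_{U_1 ≥ p_1}] < ∞ and E[U_1·1_{U_1 < p_1}] < ∞, then the expected completion time satisfies E[R] = a + (b + μ)·q/(1−q), where a = E[p_1·1_{U_1 ≥ p_1}]/(1−q) and b = E[U_1·1_{U_1 < p_1}]/q. -/
open MeasureTheory ProbabilityTheory Real Set
open scoped ENNReal

/-!
Think of the job as a sequence of attempts: the `k`-th attempt is made exactly when the first `k`
failed (`U_i < p_i` for `i < k`), and it lasts `U_k + D_k` if it fails and `p_k` if it succeeds.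
Off the null event that every attempt fails, `R` is the total duration of the attempts made. The
event that attempt `k` is made depends only on the rows `i < k` of the array `(U_i, D_i, p_i)`,
hence is independent of the duration of attempt `k`, and has probability `q^k`. Summing,
`E[R] = (E[U₁ 1_{U₁<p₁}] + q μ + E[p₁ 1_{U₁≥p₁}]) / (1 - q)`, where `q μ = E[D₁ 1_{U₁<p₁}]`
because `D₁` is independent of `(U₁, p₁)`.
-/

namespace ProbabilityTheory

variable {Ω : Type*} {mΩ : MeasurableSpace Ω} {P : Measure Ω}

lemma iIndepFun.curry {ι κ X : Type*} [MeasurableSpace X] [IsProbabilityMeasure P]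
    {f : ι × κ → Ω → X} (hf : ∀ p, Measurable (f p)) (h : iIndepFun f P) :
    iIndepFun (fun i ω j ↦ f (i, j) ω) P := by
  have _ (p : ι × κ) : IsProbabilityMeasure (P.map (f p)) :=
    Measure.isProbabilityMeasure_map (hf p).aemeasurable
  have hrow (i : ι) :
      P.map (fun ω j ↦ f (i, j) ω) = Measure.infinitePi fun j ↦ P.map (f (i, j)) :=
    (h.precomp (Prod.mk_right_injective i)).map_fun_eq_infinitePi_map fun j ↦ hf (i, j)
  rw [iIndepFun_iff_map_fun_eq_infinitePi_map fun i ↦ measurable_pi_lambda _ fun j ↦ hf (i, j)]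
  calc P.map (fun ω i j ↦ f (i, j) ω)
      = (P.map fun ω p ↦ f p ω).map (MeasurableEquiv.curry ι κ X) := by
        rw [Measure.map_map (MeasurableEquiv.measurable _) (measurable_pi_lambda _ hf)]; rfl
    _ = Measure.infinitePi fun i ↦ Measure.infinitePi fun j ↦ P.map (f (i, j)) := by
        rw [h.map_fun_eq_infinitePi_map hf,
          Measure.infinitePi_map_curry fun i j ↦ P.map (f (i, j))]
    _ = _ := by simp_rw [hrow]

lemma iIndepFun.identDistrib_curry {ι κ X : Type*} [MeasurableSpace X] [IsProbabilityMeasure P]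
    {f : ι × κ → Ω → X} (hf : ∀ p, Measurable (f p)) (h : iIndepFun f P) {i i' : ι}
    (hid : ∀ j, IdentDistrib (f (i, j)) (f (i', j)) P P) :
    IdentDistrib (fun ω j ↦ f (i, j) ω) (fun ω j ↦ f (i', j) ω) P P where
  aemeasurable_fst := (measurable_pi_lambda _ fun j ↦ hf (i, j)).aemeasurable
  aemeasurable_snd := (measurable_pi_lambda _ fun j ↦ hf (i', j)).aemeasurable
  map_eq := by
    rw [(h.precomp (Prod.mk_right_injective i)).map_fun_eq_infinitePi_map fun j ↦ hf (i, j),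
      (h.precomp (Prod.mk_right_injective i')).map_fun_eq_infinitePi_map fun j ↦ hf (i', j)]
    exact congrArg Measure.infinitePi (funext fun j ↦ (hid j).map_eq)

section GeometricTrials

variable {β : Type*} {Z : ℕ → Ω → β} {F : Set β}

lemma measurableSet_forall_lt_mem {m : MeasurableSpace Ω} {k : ℕ}
    (h : ∀ i < k, MeasurableSet[m] (Z i ⁻¹' F)) : MeasurableSet[m] {ω | ∀ i < k, Z i ω ∈ F} := by
  have hB : {ω | ∀ i < k, Z i ω ∈ F} = ⋂ i ∈ Iio k, Z i ⁻¹' F := by ext; simp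
  rw [hB]
  exact .biInter (to_countable _) h

variable [MeasurableSpace β]

lemma measure_forall_lt_mem_eq_pow (hind : iIndepFun Z P)
    (hid : ∀ k, IdentDistrib (Z k) (Z 0) P P) (hF : MeasurableSet F) (k : ℕ) :
    P {ω | ∀ i < k, Z i ω ∈ F} = P (Z 0 ⁻¹' F) ^ k := by
  have hB : {ω | ∀ i < k, Z i ω ∈ F} = ⋂ i ∈ Finset.range k, Z i ⁻¹' F := by ext; simp
  rw [hB, hind.meas_biInter fun i _ ↦ ⟨F, hF, rfl⟩,
    Finset.prod_congr rfl fun i _ ↦ (hid i).measure_mem_eq hF, Finset.prod_const,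
    Finset.card_range]

lemma measure_forall_mem_eq_zero (hind : iIndepFun Z P)
    (hid : ∀ k, IdentDistrib (Z k) (Z 0) P P) (hF : MeasurableSet F)
    (hq : P (Z 0 ⁻¹' F) < 1) :
    P {ω | ∀ i, Z i ω ∈ F} = 0 := by
  refine le_antisymm (ge_of_tendsto' (ENNReal.tendsto_pow_atTop_nhds_zero_of_lt_one hq)
    fun k ↦ ?_) bot_le
  rw [← measure_forall_lt_mem_eq_pow hind hid hF]
  exact measure_mono fun ω h i _ ↦ h i

lemma lintegral_indicator_forall_lt_mem (hZ : ∀ k, Measurable (Z k)) (hind : iIndepFun Z P)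
    (hF : MeasurableSet F) {c : β → ℝ≥0∞} (hc : Measurable c) (k : ℕ) :
    ∫⁻ ω, {ω | ∀ i < k, Z i ω ∈ F}.indicator (fun ω ↦ c (Z k ω)) ω ∂P
      = P {ω | ∀ i < k, Z i ω ∈ F} * ∫⁻ ω, c (Z k ω) ∂P := by
  set m : ℕ → MeasurableSpace Ω := fun i ↦ MeasurableSpace.comap (Z i) inferInstance
  have hle : ∀ i, m i ≤ mΩ := fun i ↦ (hZ i).comap_le
  have hpast : MeasurableSet[⨆ i ∈ Iio k, m i] {ω | ∀ i < k, Z i ω ∈ F} :=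
    measurableSet_forall_lt_mem fun i hi ↦ le_biSup m (mem_Iio.2 hi) _ ⟨F, hF, rfl⟩
  have hpresent : Measurable[⨆ i ∈ ({k} : Set ℕ), m i] fun ω ↦ c (Z k ω) :=
    hc.comp (Measurable.of_comap_le (le_biSup m (mem_singleton k)))
  calc ∫⁻ ω, {ω | ∀ i < k, Z i ω ∈ F}.indicator (fun ω ↦ c (Z k ω)) ω ∂P
      = ∫⁻ ω, {ω | ∀ i < k, Z i ω ∈ F}.indicator (fun _ ↦ 1) ω * c (Z k ω) ∂P := by
        simp only [indicator, ite_mul, one_mul, zero_mul]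
    _ = P {ω | ∀ i < k, Z i ω ∈ F} * ∫⁻ ω, c (Z k ω) ∂P := by
        rw [lintegral_mul_eq_lintegral_mul_lintegral_of_independent_measurableSpace
          (iSup₂_le fun i _ ↦ hle i) (iSup₂_le fun i _ ↦ hle i)
          (indep_iSup_of_disjoint hle hind.iIndep (by simp))
          (measurable_const.indicator hpast) hpresent,
          lintegral_indicator_const (iSup₂_le (fun i _ ↦ hle i) _ hpast), one_mul]

theorem lintegral_tsum_indicator_forall_lt_mem (hZ : ∀ k, Measurable (Z k))
    (hind : iIndepFun Z P) (hid : ∀ k, IdentDistrib (Z k) (Z 0) P P) (hF : MeasurableSet F)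
    {c : β → ℝ≥0∞} (hc : Measurable c) :
    ∫⁻ ω, ∑' k, {ω | ∀ i < k, Z i ω ∈ F}.indicator (fun ω ↦ c (Z k ω)) ω ∂P
      = (1 - P (Z 0 ⁻¹' F))⁻¹ * ∫⁻ ω, c (Z 0 ω) ∂P := by
  have hmeas (k : ℕ) : Measurable ({ω | ∀ i < k, Z i ω ∈ F}.indicator fun ω ↦ c (Z k ω)) :=
    (hc.comp (hZ k)).indicator (measurableSet_forall_lt_mem fun i _ ↦ hZ i hF)
  have hcost (k : ℕ) : ∫⁻ ω, c (Z k ω) ∂P = ∫⁻ ω, c (Z 0 ω) ∂P :=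
    ((hid k).comp hc).lintegral_eq
  rw [lintegral_tsum fun k ↦ (hmeas k).aemeasurable]
  simp_rw [lintegral_indicator_forall_lt_mem hZ hind hF hc,
    measure_forall_lt_mem_eq_pow hind hid hF, hcost]
  rw [ENNReal.tsum_mul_right, ENNReal.tsum_geometric]

end GeometricTrials

end ProbabilityTheory

noncomputable def attemptDuration (u d x : ℝ) : ℝ≥0∞ :=
  if u < x then ENNReal.ofReal (u + d) else ENNReal.ofReal x

lemma measurable_attemptDuration :
    Measurable fun z : Fin 3 → ℝ ↦ attemptDuration (z 0) (z 1) (z 2) :=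
  Measurable.ite (measurableSet_lt (measurable_pi_apply 0) (measurable_pi_apply 2))
    (ENNReal.measurable_ofReal.comp ((measurable_pi_apply 0).add (measurable_pi_apply 1)))
    (ENNReal.measurable_ofReal.comp (measurable_pi_apply 2))

lemma tsum_ite_firstSuccess_eq {u x : ℕ → ℝ} {f : ℕ → ℝ≥0∞} {n : ℕ}
    (hlt : ∀ i < n, u i < x i) (hle : x n ≤ u n) :
    ∑' m, (if (∀ i < m, u i < x i) ∧ x m ≤ u m then f m else 0) = f n := by
  rw [tsum_eq_single n fun m hm ↦ if_neg ?_, if_pos ⟨hlt, hle⟩]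
  rintro ⟨hm_lt, hm_le⟩
  rcases hm.lt_or_gt with h | h
  · exact (hlt m h).not_ge hm_le
  · exact (hm_lt n h).not_ge hle

lemma tsum_ite_attemptDuration_eq {u d x : ℕ → ℝ} (hu : ∀ k, 0 ≤ u k) (hd : ∀ k, 0 ≤ d k)
    (hx : ∀ k, 0 ≤ x k) {n : ℕ} (hlt : ∀ i < n, u i < x i) (hle : x n ≤ u n) :
    ∑' k, (if ∀ i < k, u i < x i then attemptDuration (u k) (d k) (x k) else 0)
      = ENNReal.ofReal (x n + ∑ k ∈ Finset.range n, (u k + d k)) := by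
  have hstop (k : ℕ) (hk : k ∉ Finset.range (n + 1)) : ¬ ∀ i < k, u i < x i := fun h ↦
    (h n (by simpa [Nat.lt_succ_iff, not_le] using hk)).not_ge hle
  rw [tsum_eq_sum fun k hk ↦ if_neg (hstop k hk), Finset.sum_range_succ, if_pos hlt,
    attemptDuration, if_neg hle.not_gt, add_comm,
    ENNReal.ofReal_add (hx n) (Finset.sum_nonneg fun k _ ↦ add_nonneg (hu k) (hd k)),
    ENNReal.ofReal_sum_of_nonneg fun k _ ↦ add_nonneg (hu k) (hd k)]
  congr 1
  refine Finset.sum_congr rfl fun k hk ↦ ?_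
  have hk : k < n := Finset.mem_range.1 hk
  rw [if_pos fun i hi ↦ hlt i (hi.trans hk), attemptDuration, if_pos (hlt k hk)]

section CompletionTime

variable {Ω : Type*} {mΩ : MeasurableSpace Ω} {P : Measure Ω}

lemma lintegral_attemptDuration {U D p : Ω → ℝ} (hU : Measurable U)
    (hD : Measurable D) (hp : Measurable p) (hUnn : ∀ ω, 0 ≤ U ω) (hDnn : ∀ ω, 0 ≤ D ω)
    (hind : IndepFun (fun ω ↦ (U ω, p ω)) D P) :
    ∫⁻ ω, attemptDuration (U ω) (D ω) (p ω) ∂P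
      = ∫⁻ ω, ENNReal.ofReal ({ω | U ω < p ω}.indicator U ω) ∂P
        + P {ω | U ω < p ω} * ∫⁻ ω, ENNReal.ofReal (D ω) ∂P
        + ∫⁻ ω, ENNReal.ofReal ({ω | p ω ≤ U ω}.indicator p ω) ∂P := by
  have hE : MeasurableSet {ω | U ω < p ω} := measurableSet_lt hU hp
  have hpt (ω : Ω) : attemptDuration (U ω) (D ω) (p ω)
      = ENNReal.ofReal ({ω | U ω < p ω}.indicator U ω)
        + {ω | U ω < p ω}.indicator (fun _ ↦ 1) ω * ENNReal.ofReal (D ω)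
        + ENNReal.ofReal ({ω | p ω ≤ U ω}.indicator p ω) := by
    by_cases h : U ω < p ω
    · simp [attemptDuration, indicator, h, h.not_ge, ENNReal.ofReal_add (hUnn ω) (hDnn ω)]
    · simp [attemptDuration, indicator, h, not_lt.1 h]
  have hind' : IndepFun ({ω | U ω < p ω}.indicator fun _ ↦ (1 : ℝ≥0∞))
      (fun ω ↦ ENNReal.ofReal (D ω)) P :=
    hind.comp (measurable_const.indicator (measurableSet_lt measurable_fst measurable_snd))
      ENNReal.measurable_ofReal
  rw [lintegral_congr hpt, lintegral_add_right _ ?_, lintegral_add_right _ ?_,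
    lintegral_mul_eq_lintegral_mul_lintegral_of_indepFun'' ?_ ?_ hind',
    lintegral_indicator_const hE, one_mul]
  all_goals fun_prop (disch := measurability)

theorem lintegral_completionTime [IsProbabilityMeasure P] {U D p : ℕ → Ω → ℝ}
    (hUmeas : ∀ k, Measurable (U k)) (hDmeas : ∀ k, Measurable (D k))
    (hpmeas : ∀ k, Measurable (p k))
    (hUnn : ∀ k ω, 0 ≤ U k ω) (hDnn : ∀ k ω, 0 ≤ D k ω) (hpnn : ∀ k ω, 0 ≤ p k ω)
    (hindep : iIndepFun (fun i : ℕ × Fin 3 ↦ ![U i.1, D i.1, p i.1] i.2) P)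
    (hUid : ∀ k, IdentDistrib (U k) (U 0) P P) (hDid : ∀ k, IdentDistrib (D k) (D 0) P P)
    (hpid : ∀ k, IdentDistrib (p k) (p 0) P P)
    {A : ℕ → Set Ω} (hA : ∀ n, A n = {ω | (∀ i < n, U i ω < p i ω) ∧ p n ω ≤ U n ω})
    {R : Ω → ℝ≥0∞}
    (hR : ∀ ω, R ω = (∑' n, (A n).indicator
        (fun ω ↦ ENNReal.ofReal (p n ω + ∑ k ∈ Finset.range n, (U k ω + D k ω))) ω)
      + (⋃ n, A n)ᶜ.indicator (fun _ ↦ ⊤) ω)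
    (hq : P {ω | U 0 ω < p 0 ω} < 1) :
    ∫⁻ ω, R ω ∂P = (1 - P {ω | U 0 ω < p 0 ω})⁻¹ *
      (∫⁻ ω, ENNReal.ofReal ({ω | U 0 ω < p 0 ω}.indicator (U 0) ω) ∂P
        + P {ω | U 0 ω < p 0 ω} * ∫⁻ ω, ENNReal.ofReal (D 0 ω) ∂P
        + ∫⁻ ω, ENNReal.ofReal ({ω | p 0 ω ≤ U 0 ω}.indicator (p 0) ω) ∂P) := by
  set Z : ℕ → Ω → Fin 3 → ℝ := fun k ω j ↦ ![U k, D k, p k] j ω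
  set F : Set (Fin 3 → ℝ) := {z | z 0 < z 2}
  have hX (i : ℕ × Fin 3) : Measurable (![U i.1, D i.1, p i.1] i.2) := by
    obtain ⟨k, j⟩ := i
    fin_cases j
    exacts [hUmeas k, hDmeas k, hpmeas k]
  have hZid (k : ℕ) : IdentDistrib (Z k) (Z 0) P P := hindep.identDistrib_curry hX fun j ↦ by
    fin_cases j
    exacts [hUid k, hDid k, hpid k]
  have hF : MeasurableSet F := measurableSet_lt (measurable_pi_apply 0) (measurable_pi_apply 2)
  have hRae : R =ᵐ[P] fun ω ↦ ∑' k, {ω | ∀ i < k, Z i ω ∈ F}.indicator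
      (fun ω ↦ attemptDuration (Z k ω 0) (Z k ω 1) (Z k ω 2)) ω := by
    filter_upwards [measure_eq_zero_iff_ae_notMem.1
      (measure_forall_mem_eq_zero (hindep.curry hX) hZid hF hq)] with ω hω
    obtain ⟨n, hlt, hle⟩ : ∃ n, (∀ i < n, U i ω < p i ω) ∧ p n ω ≤ U n ω := by
      have h : ∃ n, p n ω ≤ U n ω := by simpa [Z, F] using hω
      exact ⟨Nat.find h, fun i hi ↦ not_le.1 (Nat.find_min h hi), Nat.find_spec h⟩
    have hmem : ω ∈ ⋃ n, A n := mem_iUnion.2 ⟨n, (hA n).symm ▸ ⟨hlt, hle⟩⟩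
    rw [hR, indicator_of_notMem (notMem_compl_iff.2 hmem), add_zero]
    simp only [indicator, hA, mem_ofPred_eq]
    rw [tsum_ite_firstSuccess_eq hlt hle]
    simpa [Z, F] using
      (tsum_ite_attemptDuration_eq (hUnn · ω) (hDnn · ω) (hpnn · ω) hlt hle).symm
  rw [lintegral_congr_ae hRae,
    lintegral_tsum_indicator_forall_lt_mem (fun k ↦ measurable_pi_lambda _ fun j ↦ hX (k, j))
      (hindep.curry hX) hZid hF measurable_attemptDuration]
  exact congrArg ((1 - P {ω | U 0 ω < p 0 ω})⁻¹ * ·) <|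
    lintegral_attemptDuration (hUmeas 0) (hDmeas 0) (hpmeas 0) (hUnn 0) (hDnn 0)
      (hindep.indepFun_prodMk hX (0, 0) (0, 2) (0, 1) (by simp) (by simp))

lemma inv_one_sub_ofReal_mul_eq {q A B μ : ℝ} (hq0 : 0 < q) (hq1 : q < 1) (hA : 0 ≤ A)
    (hB : 0 ≤ B) (hμ : 0 ≤ μ) :
    (1 - ENNReal.ofReal q)⁻¹ *
        (ENNReal.ofReal B + ENNReal.ofReal q * ENNReal.ofReal μ + ENNReal.ofReal A)
      = ENNReal.ofReal (A / (1 - q) + (B / q + μ) * (q / (1 - q))) := by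
  have h1q : 0 < 1 - q := by linarith
  rw [← ENNReal.ofReal_one, ← ENNReal.ofReal_sub _ hq0.le, ← ENNReal.ofReal_inv_of_pos h1q,
    ← ENNReal.ofReal_mul hq0.le, ← ENNReal.ofReal_add hB (by positivity),
    ← ENNReal.ofReal_add (by positivity) hA, ← ENNReal.ofReal_mul (by positivity)]
  congr 1
  field_simp
  ring

end CompletionTime

/-- (Indices shifted to start at `0`: `U 0` is `U₁`, etc.)
If `0 < q < 1`, `E[D₁] = μ < ∞`, `E[p₁·1_{U₁ ≥ p₁}] < ∞` and `E[U₁·1_{U₁ < p₁}] < ∞`,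
then `E[R] = a + (b + μ)·q/(1-q)` where `a = E[p₁·1_{U₁ ≥ p₁}]/(1-q)` and
`b = E[U₁·1_{U₁ < p₁}]/q`. -/
theorem stmt1
    {Ω : Type*} [MeasurableSpace Ω] (P : Measure Ω) [IsProbabilityMeasure P]
    (U D p : ℕ → Ω → ℝ)
    (hUmeas : ∀ k, Measurable (U k)) (hDmeas : ∀ k, Measurable (D k))
    (hpmeas : ∀ k, Measurable (p k))
    (hUnn : ∀ k ω, 0 ≤ U k ω) (hDnn : ∀ k ω, 0 ≤ D k ω) (hpnn : ∀ k ω, 0 ≤ p k ω)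
    (hindep : iIndepFun (m := fun _ : ℕ × Fin 3 => (inferInstance : MeasurableSpace ℝ))
      (fun i : ℕ × Fin 3 => ![U i.1, D i.1, p i.1] i.2) P)
    (hUid : ∀ k, IdentDistrib (U k) (U 0) P P)
    (hDid : ∀ k, IdentDistrib (D k) (D 0) P P)
    (hpid : ∀ k, IdentDistrib (p k) (p 0) P P)
    (A : ℕ → Set Ω)
    (hA : ∀ n, A n = {ω | (∀ i < n, U i ω < p i ω) ∧ p n ω ≤ U n ω})
    (R : Ω → ℝ≥0∞)
    (hR : ∀ ω, R ω =
      (∑' n, Set.indicator (A n)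
        (fun ω => ENNReal.ofReal (p n ω + ∑ k ∈ Finset.range n, (U k ω + D k ω))) ω)
      + Set.indicator (⋃ n, A n)ᶜ (fun _ => (⊤ : ℝ≥0∞)) ω)
    (q : ℝ) (hq : q = (P {ω | U 0 ω < p 0 ω}).toReal)
    (hq0 : 0 < q) (hq1 : q < 1)
    (μ : ℝ) (hDint : Integrable (D 0) P) (hμ : μ = ∫ ω, D 0 ω ∂P)
    (haint : Integrable ({ω | p 0 ω ≤ U 0 ω}.indicator (p 0)) P)
    (hbint : Integrable ({ω | U 0 ω < p 0 ω}.indicator (U 0)) P)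
    (a : ℝ) (ha : a = (∫ ω, {ω | p 0 ω ≤ U 0 ω}.indicator (p 0) ω ∂P) / (1 - q))
    (b : ℝ) (hb : b = (∫ ω, {ω | U 0 ω < p 0 ω}.indicator (U 0) ω ∂P) / q) :
    ∫⁻ ω, R ω ∂P = ENNReal.ofReal (a + (b + μ) * (q / (1 - q))) := by
  subst ha hb hμ
  have hPq : P {ω | U 0 ω < p 0 ω} = ENNReal.ofReal q := by
    rw [hq, ENNReal.ofReal_toReal (measure_ne_top _ _)]
  have hnn {f : Ω → ℝ} {s : Set Ω} (hf : ∀ ω, 0 ≤ f ω) : 0 ≤ᵐ[P] s.indicator f :=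
    ae_of_all _ fun ω ↦ indicator_nonneg (fun ω _ ↦ hf ω) ω
  rw [lintegral_completionTime hUmeas hDmeas hpmeas hUnn hDnn hpnn hindep hUid hDid hpid hA hR
      (hPq ▸ ENNReal.ofReal_lt_one.2 hq1), hPq,
    ← ofReal_integral_eq_lintegral_ofReal hbint (hnn (hUnn 0)),
    ← ofReal_integral_eq_lintegral_ofReal hDint (ae_of_all _ (hDnn 0)),
    ← ofReal_integral_eq_lintegral_ofReal haint (hnn (hpnn 0))]
  exact inv_one_sub_ofReal_mul_eq hq0 hq1 (integral_nonneg_of_ae (hnn (hpnn 0)))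
    (integral_nonneg_of_ae (hnn (hUnn 0))) (integral_nonneg (hDnn 0))
end

section
/- If 0 < q < 1, E[D_1] = μ < ∞, E[p_1·1_{U_1 ≥ p_1}] < ∞ and E[U_1·1_{U_1 < p_1}] < ∞, then for every n ≥ 3, E[p_n·(Σ_{k=1}^{n−1}(U_k + D_k))·1_{U_i < p_i for 1 ≤ i ≤ n−1, U_n ≥ p_n}] = (n−1)·a·(b + μ)·(1−q)·q^{n−1}, where a = E[p_1·1_{U_1 ≥ p_1}]/(1−q) and b = E[U_1·1_{U_1 < p_1}]/q. -/
/-!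
Expand the sum: `p_n · ∑_{k<n} (U_k + D_k) · 1_{A_n}` is the sum over `k < n` of products
`∏_{i ≤ n} f_{k,i}(U_i, D_i, p_i)`, where the factor of cycle `n` is `p_n · 1_{p_n ≤ U_n}`, that of
cycle `k` is `(U_k + D_k) · 1_{U_k < p_k}` and every other cycle contributes `1_{U_i < p_i}`.
The cycles are independent and identically distributed, so each product has expectation
`(1 - q) a · (b + μ) q · q^{n-1}`, the middle factor using that `D_k` is independent of
`(U_k, p_k)`; summing the `n` equal terms gives the claim.
-/

open MeasureTheory ProbabilityTheory Real Set
open scoped ENNReal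

namespace ProbabilityTheory

variable {Ω ι κ β : Type*} [MeasurableSpace Ω] {P : Measure Ω} [MeasurableSpace β]
  {F : ι × κ → Ω → β}

lemma iIndepFun.indepFun_block_finset (h : iIndepFun F P) (hF : ∀ x, Measurable (F x))
    [Fintype κ] {s : Finset ι} {c : ι} (hc : c ∉ s) :
    IndepFun (fun ω j => F (c, j) ω) (fun ω (i : s) j => F (i, j) ω) P := by
  classical
  have hST : Disjoint ({c} ×ˢ Finset.univ : Finset (ι × κ)) (s ×ˢ Finset.univ) :=
    Finset.disjoint_product.mpr (.inl (Finset.disjoint_singleton_left.mpr hc))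
  refine (h.indepFun_finset _ _ hST hF).comp (φ := fun v j => v ⟨(c, j), by simp⟩)
    (ψ := fun v (i : s) j => v ⟨(i, j), by simp⟩) ?_ ?_ <;> fun_prop

lemma iIndepFun.indepFun_block_finsetProd (h : iIndepFun F P) (hF : ∀ x, Measurable (F x))
    [Fintype κ] {g : ι → (κ → β) → ℝ} (hg : ∀ i, Measurable (g i)) {s : Finset ι} {c : ι}
    (hc : c ∉ s) :
    IndepFun (fun ω => g c fun j => F (c, j) ω)
      (fun ω => ∏ i ∈ s, g i fun j => F (i, j) ω) P := by
  have := (h.indepFun_block_finset hF hc).comp (hg c)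
    (Finset.measurable_prod (f := fun (i : s) (v : s → κ → β) => g i (v i)) Finset.univ
      fun i _ => (hg i).comp (measurable_pi_apply i))
  simp_rw [← Finset.prod_coe_sort s]
  exact this

lemma iIndepFun.integral_finset_prod_block (h : iIndepFun F P) (hF : ∀ x, Measurable (F x))
    [Fintype κ] {g : ι → (κ → β) → ℝ} (hg : ∀ i, Measurable (g i)) (s : Finset ι) :
    ∫ ω, ∏ i ∈ s, g i (fun j => F (i, j) ω) ∂P = ∏ i ∈ s, ∫ ω, g i (fun j => F (i, j) ω) ∂P := by
  classical
  have := h.isProbabilityMeasure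
  induction s using Finset.induction_on with
  | empty => simp
  | insert c s hc ih =>
    simp only [Finset.prod_insert hc, ← ih]
    exact (h.indepFun_block_finsetProd hF hg hc).integral_fun_mul_eq_mul_integral
      (by fun_prop : Measurable _).aestronglyMeasurable
      (by fun_prop : Measurable _).aestronglyMeasurable

lemma iIndepFun.integrable_finset_prod_block (h : iIndepFun F P) (hF : ∀ x, Measurable (F x))
    [Fintype κ] {g : ι → (κ → β) → ℝ} (hg : ∀ i, Measurable (g i)) (s : Finset ι)
    (hint : ∀ i ∈ s, Integrable (fun ω => g i fun j => F (i, j) ω) P) :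
    Integrable (fun ω => ∏ i ∈ s, g i fun j => F (i, j) ω) P := by
  classical
  have := h.isProbabilityMeasure
  induction s using Finset.induction_on with
  | empty => simp
  | insert c s hc ih =>
    simp only [Finset.prod_insert hc]
    exact (h.indepFun_block_finsetProd hF hg hc).integrable_mul
      (hint c (Finset.mem_insert_self c s)) (ih fun i hi => hint i (Finset.mem_insert_of_mem hi))

lemma iIndepFun.identDistrib_block (h : iIndepFun F P) (hF : ∀ x, Measurable (F x))
    [Fintype κ] {i i' : ι} (hid : ∀ j, IdentDistrib (F (i, j)) (F (i', j)) P P) :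
    IdentDistrib (fun ω j => F (i, j) ω) (fun ω j => F (i', j) ω) P P := by
  refine ⟨by fun_prop, by fun_prop, ?_⟩
  rw [(h.precomp (Prod.mk_right_injective i)).map_fun_eq_pi_map (fun j => (hF _).aemeasurable),
    (h.precomp (Prod.mk_right_injective i')).map_fun_eq_pi_map (fun j => (hF _).aemeasurable)]
  exact congrArg Measure.pi (funext fun j => (hid j).map_eq)

end ProbabilityTheory

lemma Finset.prod_range_succ_ite_ite {M : Type*} [CommMonoid M] {n k : ℕ} (hk : k < n)
    (y x e : ℕ → M) :
    ∏ i ∈ range (n + 1), (if i = n then y i else if i = k then x i else e i) =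
      y n * x k * ∏ i ∈ (range n).erase k, e i := by
  have hbody : ∀ i ∈ (range n).erase k,
      (if i = n then y i else if i = k then x i else e i) = e i := fun i hi => by
    rw [if_neg (mem_range.mp (mem_of_mem_erase hi)).ne, if_neg (ne_of_mem_erase hi)]
  rw [prod_range_succ, if_pos rfl, ← mul_prod_erase _ _ (mem_range.mpr hk), if_neg hk.ne,
    if_pos rfl, prod_congr rfl hbody]
  ac_rfl

noncomputable section

def preemptInd (u r : ℝ) : ℝ := if u < r then 1 else 0

/-- `u`, `d`, `r` are the uptime, downtime and processing time of cycle `i`. -/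
def cycleFactor (n k i : ℕ) (u d r : ℝ) : ℝ :=
  if i = n then (if r ≤ u then r else 0)
  else if i = k then (u + d) * preemptInd u r
  else preemptInd u r

end

lemma sum_prod_cycleFactor (n : ℕ) (u d r : ℕ → ℝ) :
    ∑ k ∈ Finset.range n, ∏ i ∈ Finset.range (n + 1), cycleFactor n k i (u i) (d i) (r i) =
      if (∀ i < n, u i < r i) ∧ r n ≤ u n then r n * ∑ k ∈ Finset.range n, (u k + d k) else 0 := by
  have hterm : ∀ k ∈ Finset.range n,
      ∏ i ∈ Finset.range (n + 1), cycleFactor n k i (u i) (d i) (r i) =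
        (if r n ≤ u n then r n else 0) *
          ((u k + d k) * if ∀ i ∈ Finset.range n, u i < r i then 1 else 0) := fun k hk => by
    simp only [cycleFactor]
    rw [Finset.prod_range_succ_ite_ite (Finset.mem_range.mp hk), mul_assoc, mul_assoc,
      Finset.mul_prod_erase _ (fun i => preemptInd (u i) (r i)) hk]
    simp only [preemptInd, Finset.prod_boole]
  rw [Finset.sum_congr rfl hterm, ← Finset.mul_sum, ← Finset.sum_mul]
  simp only [Finset.mem_range]
  split_ifs <;> simp_all

lemma measurable_preemptInd : Measurable fun x : ℝ × ℝ => preemptInd x.1 x.2 :=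
  Measurable.ite (measurableSet_lt measurable_fst measurable_snd) measurable_const measurable_const

lemma measurable_cycleFactor (n k i : ℕ) :
    Measurable fun v : Fin 3 → ℝ => cycleFactor n k i (v 0) (v 1) (v 2) := by
  have hpre : Measurable fun v : Fin 3 → ℝ => preemptInd (v 0) (v 2) :=
    measurable_preemptInd.comp (by fun_prop : Measurable fun v : Fin 3 → ℝ => (v 0, v 2))
  unfold cycleFactor
  split_ifs
  · exact Measurable.ite (measurableSet_le (by fun_prop) (by fun_prop)) (by fun_prop)
      measurable_const
  · exact (by fun_prop : Measurable fun v : Fin 3 → ℝ => v 0 + v 1).mul hpre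
  · exact hpre

section OneCycle

variable {Ω : Type*} {U D p : Ω → ℝ}

lemma preemptInd_eq_indicator (ω : Ω) :
    preemptInd (U ω) (p ω) = {ω | U ω < p ω}.indicator 1 ω := by
  by_cases h : U ω < p ω <;> simp [preemptInd, h]

lemma add_mul_preemptInd (ω : Ω) :
    (U ω + D ω) * preemptInd (U ω) (p ω) =
      {ω | U ω < p ω}.indicator U ω + D ω * preemptInd (U ω) (p ω) := by
  by_cases h : U ω < p ω <;> simp [preemptInd, h]

lemma ite_le_eq_indicator (ω : Ω) :
    (if p ω ≤ U ω then p ω else 0) = {ω | p ω ≤ U ω}.indicator p ω := by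
  by_cases h : p ω ≤ U ω <;> simp [h]

variable [MeasurableSpace Ω] {P : Measure Ω}

lemma indepFun_preemptInd (hDUp : IndepFun D (fun ω => (U ω, p ω)) P) :
    IndepFun D (fun ω => preemptInd (U ω) (p ω)) P :=
  hDUp.comp (φ := id) measurable_id measurable_preemptInd

lemma integral_preemptInd (hU : Measurable U) (hp : Measurable p) :
    ∫ ω, preemptInd (U ω) (p ω) ∂P = P.real {ω | U ω < p ω} := by
  simp_rw [preemptInd_eq_indicator]
  exact integral_indicator_one (measurableSet_lt hU hp)

variable [IsFiniteMeasure P]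

lemma integrable_preemptInd (hU : Measurable U) (hp : Measurable p) :
    Integrable (fun ω => preemptInd (U ω) (p ω)) P := by
  simp_rw [preemptInd_eq_indicator]
  exact (integrable_const 1).indicator (measurableSet_lt hU hp)

lemma integrable_mul_preemptInd (hU : Measurable U) (hp : Measurable p)
    (hDUp : IndepFun D (fun ω => (U ω, p ω)) P) (hDint : Integrable D P) :
    Integrable (fun ω => D ω * preemptInd (U ω) (p ω)) P :=
  (indepFun_preemptInd hDUp).integrable_mul hDint (integrable_preemptInd hU hp)

lemma integrable_cycleFactor (hU : Measurable U) (hp : Measurable p)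
    (hDUp : IndepFun D (fun ω => (U ω, p ω)) P) (hDint : Integrable D P)
    (hpint : Integrable ({ω | p ω ≤ U ω}.indicator p) P)
    (hUint : Integrable ({ω | U ω < p ω}.indicator U) P) (n k i : ℕ) :
    Integrable (fun ω => cycleFactor n k i (U ω) (D ω) (p ω)) P := by
  unfold cycleFactor
  split_ifs
  · simpa only [ite_le_eq_indicator] using hpint
  · simp_rw [add_mul_preemptInd]
    exact hUint.add (integrable_mul_preemptInd hU hp hDUp hDint)
  · exact integrable_preemptInd hU hp

lemma integral_cycleFactor (hU : Measurable U) (hD : Measurable D) (hp : Measurable p)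
    (hDUp : IndepFun D (fun ω => (U ω, p ω)) P) (hDint : Integrable D P)
    (hUint : Integrable ({ω | U ω < p ω}.indicator U) P) (n k i : ℕ) :
    ∫ ω, cycleFactor n k i (U ω) (D ω) (p ω) ∂P =
      if i = n then ∫ ω, {ω | p ω ≤ U ω}.indicator p ω ∂P
      else if i = k then
        ∫ ω, {ω | U ω < p ω}.indicator U ω ∂P + (∫ ω, D ω ∂P) * P.real {ω | U ω < p ω}
      else P.real {ω | U ω < p ω} := by
  unfold cycleFactor
  split_ifs
  · simp only [ite_le_eq_indicator]
  · simp_rw [add_mul_preemptInd]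
    rw [integral_add hUint (integrable_mul_preemptInd hU hp hDUp hDint),
      (indepFun_preemptInd hDUp).integral_fun_mul_eq_mul_integral hD.aestronglyMeasurable
        (integrable_preemptInd hU hp).aestronglyMeasurable, integral_preemptInd hU hp]
  · exact integral_preemptInd hU hp

end OneCycle

section Cycles

variable {Ω : Type*} [MeasurableSpace Ω] {P : Measure Ω} {F : ℕ × Fin 3 → Ω → ℝ}

lemma ProbabilityTheory.iIndepFun.indepFun_one_prodMk_zero_two (hF : ∀ x, Measurable (F x))
    (hindep : iIndepFun F P) (i : ℕ) :
    IndepFun (F (i, 1)) (fun ω => (F (i, 0) ω, F (i, 2) ω)) P :=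
  (hindep.indepFun_prodMk hF (i, 0) (i, 2) (i, 1) (by simp) (by simp)).symm

lemma integrable_cycleFactor_of_iIndepFun (hF : ∀ x, Measurable (F x)) (hindep : iIndepFun F P)
    (hid : ∀ i j, IdentDistrib (F (i, j)) (F (0, j)) P P) (hDint : Integrable (F (0, 1)) P)
    (hpint : Integrable ({ω | F (0, 2) ω ≤ F (0, 0) ω}.indicator (F (0, 2))) P)
    (hUint : Integrable ({ω | F (0, 0) ω < F (0, 2) ω}.indicator (F (0, 0))) P) (n k i : ℕ) :
    Integrable (fun ω => cycleFactor n k i (F (i, 0) ω) (F (i, 1) ω) (F (i, 2) ω)) P := by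
  have := hindep.isProbabilityMeasure
  refine ((hindep.identDistrib_block hF (hid i)).comp
    (measurable_cycleFactor n k i)).integrable_iff.mpr ?_
  exact integrable_cycleFactor (hF _) (hF _) (hindep.indepFun_one_prodMk_zero_two hF 0)
    hDint hpint hUint n k i

lemma integral_cycleFactor_of_iIndepFun (hF : ∀ x, Measurable (F x)) (hindep : iIndepFun F P)
    (hid : ∀ i j, IdentDistrib (F (i, j)) (F (0, j)) P P) (hDint : Integrable (F (0, 1)) P)
    (hUint : Integrable ({ω | F (0, 0) ω < F (0, 2) ω}.indicator (F (0, 0))) P) (n k i : ℕ) :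
    ∫ ω, cycleFactor n k i (F (i, 0) ω) (F (i, 1) ω) (F (i, 2) ω) ∂P =
      if i = n then ∫ ω, {ω | F (0, 2) ω ≤ F (0, 0) ω}.indicator (F (0, 2)) ω ∂P
      else if i = k then
        ∫ ω, {ω | F (0, 0) ω < F (0, 2) ω}.indicator (F (0, 0)) ω ∂P +
          (∫ ω, F (0, 1) ω ∂P) * P.real {ω | F (0, 0) ω < F (0, 2) ω}
      else P.real {ω | F (0, 0) ω < F (0, 2) ω} := by
  have := hindep.isProbabilityMeasure
  refine ((hindep.identDistrib_block hF (hid i)).comp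
    (measurable_cycleFactor n k i)).integral_eq.trans ?_
  exact integral_cycleFactor (hF _) (hF _) (hF _) (hindep.indepFun_one_prodMk_zero_two hF 0)
    hDint hUint n k i

lemma integral_sum_prod_cycleFactor (hF : ∀ x, Measurable (F x)) (hindep : iIndepFun F P)
    (hid : ∀ i j, IdentDistrib (F (i, j)) (F (0, j)) P P) (hDint : Integrable (F (0, 1)) P)
    (hpint : Integrable ({ω | F (0, 2) ω ≤ F (0, 0) ω}.indicator (F (0, 2))) P)
    (hUint : Integrable ({ω | F (0, 0) ω < F (0, 2) ω}.indicator (F (0, 0))) P) (n : ℕ) :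
    ∫ ω, ∑ k ∈ Finset.range n, ∏ i ∈ Finset.range (n + 1),
        cycleFactor n k i (F (i, 0) ω) (F (i, 1) ω) (F (i, 2) ω) ∂P =
      n * ((∫ ω, {ω | F (0, 2) ω ≤ F (0, 0) ω}.indicator (F (0, 2)) ω ∂P) *
        (∫ ω, {ω | F (0, 0) ω < F (0, 2) ω}.indicator (F (0, 0)) ω ∂P +
          (∫ ω, F (0, 1) ω ∂P) * P.real {ω | F (0, 0) ω < F (0, 2) ω}) *
        P.real {ω | F (0, 0) ω < F (0, 2) ω} ^ (n - 1)) := by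
  set g : ℕ → ℕ → (Fin 3 → ℝ) → ℝ := fun k i v => cycleFactor n k i (v 0) (v 1) (v 2)
  have hterm : ∀ k ∈ Finset.range n, ∫ ω, ∏ i ∈ Finset.range (n + 1),
      g k i (fun j => F (i, j) ω) ∂P =
        (∫ ω, {ω | F (0, 2) ω ≤ F (0, 0) ω}.indicator (F (0, 2)) ω ∂P) *
          (∫ ω, {ω | F (0, 0) ω < F (0, 2) ω}.indicator (F (0, 0)) ω ∂P +
            (∫ ω, F (0, 1) ω ∂P) * P.real {ω | F (0, 0) ω < F (0, 2) ω}) *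
          P.real {ω | F (0, 0) ω < F (0, 2) ω} ^ (n - 1) := fun k hk => by
    rw [hindep.integral_finset_prod_block hF (measurable_cycleFactor n k)]
    simp only [integral_cycleFactor_of_iIndepFun hF hindep hid hDint hUint]
    rw [Finset.prod_range_succ_ite_ite (Finset.mem_range.mp hk), Finset.prod_const,
      Finset.card_erase_of_mem hk, Finset.card_range]
  rw [integral_finsetSum _ fun k _ => hindep.integrable_finset_prod_block hF
      (measurable_cycleFactor n k) _ fun i _ =>
        integrable_cycleFactor_of_iIndepFun hF hindep hid hDint hpint hUint n k i,
    Finset.sum_congr rfl hterm, Finset.sum_const, Finset.card_range, nsmul_eq_mul]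

end Cycles

/-- Cycles are indexed from `0`: the paper's `n ≥ 3` and `(n-1)·a·(b+μ)·(1-q)·q^{n-1}` become
`n ≥ 2` and `n·a·(b+μ)·(1-q)·qⁿ`. -/
theorem stmt5_general
    {Ω : Type*} [MeasurableSpace Ω] (P : Measure Ω) [IsProbabilityMeasure P]
    (U D p : ℕ → Ω → ℝ)
    (hUmeas : ∀ k, Measurable (U k)) (hDmeas : ∀ k, Measurable (D k))
    (hpmeas : ∀ k, Measurable (p k))
    (hindep : iIndepFun
      (fun i : ℕ × Fin 3 => ![U i.1, D i.1, p i.1] i.2) P)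
    (hUid : ∀ k, IdentDistrib (U k) (U 0) P P)
    (hDid : ∀ k, IdentDistrib (D k) (D 0) P P)
    (hpid : ∀ k, IdentDistrib (p k) (p 0) P P)
    (A : ℕ → Set Ω)
    (hA : ∀ n, A n = {ω | (∀ i < n, U i ω < p i ω) ∧ p n ω ≤ U n ω})
    (q : ℝ) (hq : q = (P {ω | U 0 ω < p 0 ω}).toReal)
    (hq0 : 0 < q) (hq1 : q < 1)
    (μ : ℝ) (hDint : Integrable (D 0) P) (hμ : μ = ∫ ω, D 0 ω ∂P)
    (haint : Integrable ({ω | p 0 ω ≤ U 0 ω}.indicator (p 0)) P)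
    (hbint : Integrable ({ω | U 0 ω < p 0 ω}.indicator (U 0)) P)
    (a : ℝ) (ha : a = (∫ ω, {ω | p 0 ω ≤ U 0 ω}.indicator (p 0) ω ∂P) / (1 - q))
    (b : ℝ) (hb : b = (∫ ω, {ω | U 0 ω < p 0 ω}.indicator (U 0) ω ∂P) / q) :
    ∀ n, 2 ≤ n →
      ∫ ω, (A n).indicator
          (fun ω => p n ω * ∑ k ∈ Finset.range n, (U k ω + D k ω)) ω ∂P =
        (n : ℝ) * a * (b + μ) * (1 - q) * q ^ n := by
  intro n hn
  set F : ℕ × Fin 3 → Ω → ℝ := fun i => ![U i.1, D i.1, p i.1] i.2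
  have hF : ∀ x, Measurable (F x) := fun ⟨i, j⟩ => by
    fin_cases j
    exacts [hUmeas i, hDmeas i, hpmeas i]
  have hid : ∀ i j, IdentDistrib (F (i, j)) (F (0, j)) P P := fun i j => by
    fin_cases j
    exacts [hUid i, hDid i, hpid i]
  have hpoint : ∀ ω, (A n).indicator (fun ω => p n ω * ∑ k ∈ Finset.range n, (U k ω + D k ω)) ω =
      ∑ k ∈ Finset.range n, ∏ i ∈ Finset.range (n + 1),
        cycleFactor n k i (F (i, 0) ω) (F (i, 1) ω) (F (i, 2) ω) := fun ω => by
    rw [hA n, Set.indicator_apply]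
    exact (sum_prod_cycleFactor n (U · ω) (D · ω) (p · ω)).symm
  rw [integral_congr_ae (ae_of_all _ hpoint),
    integral_sum_prod_cycleFactor hF hindep hid hDint haint hbint n]
  obtain ⟨m, rfl⟩ := Nat.exists_eq_add_of_le' (one_le_two.trans hn)
  rw [← measureReal_def] at hq
  have h1q : 1 - q ≠ 0 := by linarith
  have hU0 : F (0, 0) = U 0 := rfl
  have hD0 : F (0, 1) = D 0 := rfl
  have hp0 : F (0, 2) = p 0 := rfl
  rw [hU0, hD0, hp0, ← hq, ← hμ, ha, hb, Nat.add_sub_cancel]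
  field_simp
  ring

/-- (Indices shifted to start at `0`: the paper's `n ≥ 3` with value
`(n-1)·a·(b+μ)·(1-q)·q^{n-1}` becomes `n ≥ 2` with value `n·a·(b+μ)·(1-q)·qⁿ`.)
If `0 < q < 1`, `E[D₁] = μ < ∞`, `E[p₁·1_{U₁ ≥ p₁}] < ∞`, `E[U₁·1_{U₁ < p₁}] < ∞`,
then for every `n ≥ 3` (paper indexing),
`E[p_n·(Σ_{k=1}^{n-1}(U_k + D_k))·1_{A_n}] = (n-1)·a·(b+μ)·(1-q)·q^{n-1}`. -/
theorem stmt5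
    {Ω : Type*} [MeasurableSpace Ω] (P : Measure Ω) [IsProbabilityMeasure P]
    (U D p : ℕ → Ω → ℝ)
    (hUmeas : ∀ k, Measurable (U k)) (hDmeas : ∀ k, Measurable (D k))
    (hpmeas : ∀ k, Measurable (p k))
    (hUnn : ∀ k ω, 0 ≤ U k ω) (hDnn : ∀ k ω, 0 ≤ D k ω) (hpnn : ∀ k ω, 0 ≤ p k ω)
    (hindep : iIndepFun
      (fun i : ℕ × Fin 3 => ![U i.1, D i.1, p i.1] i.2) P)
    (hUid : ∀ k, IdentDistrib (U k) (U 0) P P)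
    (hDid : ∀ k, IdentDistrib (D k) (D 0) P P)
    (hpid : ∀ k, IdentDistrib (p k) (p 0) P P)
    (A : ℕ → Set Ω)
    (hA : ∀ n, A n = {ω | (∀ i < n, U i ω < p i ω) ∧ p n ω ≤ U n ω})
    (q : ℝ) (hq : q = (P {ω | U 0 ω < p 0 ω}).toReal)
    (hq0 : 0 < q) (hq1 : q < 1)
    (μ : ℝ) (hDint : Integrable (D 0) P) (hμ : μ = ∫ ω, D 0 ω ∂P)
    (haint : Integrable ({ω | p 0 ω ≤ U 0 ω}.indicator (p 0)) P)
    (hbint : Integrable ({ω | U 0 ω < p 0 ω}.indicator (U 0)) P)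
    (a : ℝ) (ha : a = (∫ ω, {ω | p 0 ω ≤ U 0 ω}.indicator (p 0) ω ∂P) / (1 - q))
    (b : ℝ) (hb : b = (∫ ω, {ω | U 0 ω < p 0 ω}.indicator (U 0) ω ∂P) / q) :
    ∀ n, 2 ≤ n →
      ∫ ω, (A n).indicator
          (fun ω => p n ω * ∑ k ∈ Finset.range n, (U k ω + D k ω)) ω ∂P =
        (n : ℝ) * a * (b + μ) * (1 - q) * q ^ n :=
  stmt5_general P U D p hUmeas hDmeas hpmeas hindep hUid hDid hpid A hA q hq hq0 hq1 μ hDint hμ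
    haint hbint a ha b hb
end

section
/- If 0 < q < 1, E[U_1·1_{U_1 < p_1}] < ∞ and E[U_1²·1_{U_1 < p_1}] < ∞, then for every n ≥ 3, E[(Σ_{k=1}^{n−1} U_k)²·1_{U_i < p_i for 1 ≤ i ≤ n−1, U_n ≥ p_n}] = (n−1)·d·(1−q)·q^{n−1} + (n−1)(n−2)·b²·(1−q)·q^{n−1}, where b = E[U_1·1_{U_1 < p_1}]/q and d = E[U_1²·1_{U_1 < p_1}]/q. -/
/-!
On `A n` we have `(∑_{k<n} U_k)² = ∑_{k,l<n} U_k U_l`, and `U_k U_l · 1_{A n}` is a product over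
`i ≤ n` of functions of the single pair `(U_i, p_i)`: `U_i ^ m_i · 1{U_i < p_i}` for `i < n`, where
`m_i` counts the occurrences of `i` among `k, l`, and `1{p_n ≤ U_n}` for `i = n`. The pairs are
independent and identically distributed, so the expectation factors as
`∏_{i<n} E[U^{m_i}; U < p] · (1 - q)`, which is `dq · q^(n-1) · (1 - q)` if `k = l` and
`(bq)² · q^(n-2) · (1 - q)` otherwise. Summing over the `n` diagonal and `n(n-1)` off-diagonal
pairs gives the formula.
-/

open MeasureTheory ProbabilityTheory

namespace ProbabilityTheory

variable {Ω ι κ β : Type*} [MeasurableSpace Ω] [MeasurableSpace β] [Fintype κ] {μ : Measure Ω}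
  {f : ι × κ → Ω → β}

theorem iIndepFun.indepFun_rows_of_notMem (hf : iIndepFun f μ) (hmeas : ∀ x, Measurable (f x))
    {s : Finset ι} {m : ι} (hm : m ∉ s) :
    IndepFun (fun ω (i : s) (j : κ) => f (i, j) ω) (fun ω j => f (m, j) ω) μ := by
  classical
  have hdisj : Disjoint (s ×ˢ Finset.univ) ({m} ×ˢ (Finset.univ : Finset κ)) := by
    rw [Finset.disjoint_product]
    exact Or.inl (Finset.disjoint_singleton_right.2 hm)
  refine (hf.indepFun_finset _ _ hdisj hmeas).comp
    (φ := fun y (i : s) j => y ⟨(i, j), by simp⟩) (ψ := fun y j => y ⟨(m, j), by simp⟩) ?_ ?_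
  · exact measurable_pi_lambda _ fun i => measurable_pi_lambda _ fun j => measurable_pi_apply _
  · exact measurable_pi_lambda _ fun j => measurable_pi_apply _

theorem iIndepFun.indepFun_finsetProd_rows_of_notMem (hf : iIndepFun f μ)
    (hmeas : ∀ x, Measurable (f x)) {φ : ι → (κ → β) → ℝ} (hφ : ∀ i, Measurable (φ i))
    {s : Finset ι} {m : ι} (hm : m ∉ s) :
    IndepFun (fun ω => φ m (fun j => f (m, j) ω)) (fun ω => ∏ i ∈ s, φ i (fun j => f (i, j) ω))
      μ := by
  have hprod : Measurable fun y : s → κ → β => ∏ i : s, φ i (y i) :=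
    Finset.measurable_prod Finset.univ fun i _ => (hφ i).comp (measurable_pi_apply i)
  have hrows : (fun ω => ∏ i ∈ s, φ i fun j => f (i, j) ω) =
      (fun y : s → κ → β => ∏ i : s, φ i (y i)) ∘ fun ω (i : s) j => f (i, j) ω :=
    funext fun ω => (Finset.prod_coe_sort s fun i => φ i fun j => f (i, j) ω).symm
  rw [hrows]
  exact (hf.indepFun_rows_of_notMem hmeas hm).symm.comp (hφ m) hprod

theorem iIndepFun.integral_finsetProd_rows (hf : iIndepFun f μ) (hmeas : ∀ x, Measurable (f x))
    {φ : ι → (κ → β) → ℝ} (hφ : ∀ i, Measurable (φ i)) (s : Finset ι) :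
    ∫ ω, ∏ i ∈ s, φ i (fun j => f (i, j) ω) ∂μ = ∏ i ∈ s, ∫ ω, φ i (fun j => f (i, j) ω) ∂μ := by
  classical
  have := hf.isProbabilityMeasure
  have hrow : ∀ i, Measurable fun ω j => f (i, j) ω :=
    fun i => measurable_pi_lambda _ fun j => hmeas (i, j)
  induction s using Finset.induction with
  | empty => simp
  | insert m s hm ih =>
    simp only [Finset.prod_insert hm]
    rw [(hf.indepFun_finsetProd_rows_of_notMem hmeas hφ hm).integral_fun_mul_eq_mul_integral
      ((hφ m).comp (hrow m)).aestronglyMeasurable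
      (Finset.measurable_prod s fun i _ => (hφ i).comp (hrow i)).aestronglyMeasurable, ih]

theorem iIndepFun.integrable_finsetProd_rows (hf : iIndepFun f μ)
    (hmeas : ∀ x, Measurable (f x)) {φ : ι → (κ → β) → ℝ} (hφ : ∀ i, Measurable (φ i))
    (hint : ∀ i, Integrable (fun ω => φ i (fun j => f (i, j) ω)) μ) (s : Finset ι) :
    Integrable (fun ω => ∏ i ∈ s, φ i (fun j => f (i, j) ω)) μ := by
  classical
  have := hf.isProbabilityMeasure
  induction s using Finset.induction with
  | empty => simp
  | insert m s hm ih =>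
    simp only [Finset.prod_insert hm]
    exact (hf.indepFun_finsetProd_rows_of_notMem hmeas hφ hm).integrable_mul (hint m) ih

end ProbabilityTheory

lemma Finset.sum_range_sum_range_ite_eq {R : Type*} [CommRing R] (n : ℕ) (a c : R) :
    ∑ k ∈ Finset.range n, ∑ l ∈ Finset.range n, (if k = l then a else c) =
      n * a + n * (n - 1) * c := by
  have hinner : ∀ k ∈ Finset.range n,
      ∑ l ∈ Finset.range n, (if k = l then a else c) = a + (n - 1) * c := by
    intro k hk
    simp_rw [show ∀ l, (if k = l then a else c) = (if k = l then a - c else 0) + c from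
      fun l => by split_ifs <;> ring]
    rw [Finset.sum_add_distrib, Finset.sum_ite_eq, if_pos hk, Finset.sum_const,
      Finset.card_range, nsmul_eq_mul]
    ring
  rw [Finset.sum_congr rfl hinner, Finset.sum_const, Finset.card_range, nsmul_eq_mul]
  ring

namespace PreemptRepeat

def mult (k l i : ℕ) : ℕ := (if k = i then 1 else 0) + (if l = i then 1 else 0)

lemma mult_of_ne {k l i : ℕ} (hk : k ≠ i) (hl : l ≠ i) : mult k l i = 0 := by
  simp [mult, hk, hl]

lemma prod_pow_mult {M : Type*} [CommMonoid M] (x : ℕ → M) {n k l : ℕ} (hk : k < n)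
    (hl : l < n) : ∏ i ∈ Finset.range n, x i ^ mult k l i = x k * x l := by
  simp only [mult, pow_add, Finset.prod_mul_distrib, Finset.prod_pow_boole, Finset.mem_range,
    hk, hl, if_true]

lemma prod_range_apply_mult {R : Type*} [CommMonoid R] (M : ℕ → R) {n k l : ℕ} (hk : k < n)
    (hl : l < n) :
    ∏ i ∈ Finset.range n, M (mult k l i) =
      if k = l then M 2 * M 0 ^ (n - 1) else M 1 ^ 2 * M 0 ^ (n - 2) := by
  have hk' : k ∈ Finset.range n := Finset.mem_range.2 hk
  rw [← Finset.mul_prod_erase _ _ hk']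
  split_ifs with hkl
  · subst hkl
    rw [Finset.prod_congr rfl fun i hi => by rw [mult_of_ne (Finset.ne_of_mem_erase hi).symm
      (Finset.ne_of_mem_erase hi).symm], Finset.prod_const, Finset.card_erase_of_mem hk',
      Finset.card_range]
    simp [mult]
  · have hl' : l ∈ (Finset.range n).erase k :=
      Finset.mem_erase.2 ⟨Ne.symm hkl, Finset.mem_range.2 hl⟩
    rw [← Finset.mul_prod_erase _ _ hl', Finset.prod_congr rfl fun i hi => by
      rw [mult_of_ne (Finset.ne_of_mem_erase (Finset.mem_of_mem_erase hi)).symm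
        (Finset.ne_of_mem_erase hi).symm], Finset.prod_const, Finset.card_erase_of_mem hl',
      Finset.card_erase_of_mem hk', Finset.card_range, Nat.sub_sub]
    simp [mult, hkl, Ne.symm hkl, sq, mul_assoc]

/-- The condition on `(U_i, p_i)` defining `A n`: the job is preempted at the attempts `i < n`
and completed at the attempt `n`. -/
def attemptSet (n i : ℕ) : Set (ℝ × ℝ) := if i < n then {x | x.1 < x.2} else {x | x.2 ≤ x.1}

noncomputable def attemptFactor (n k l i : ℕ) : ℝ × ℝ → ℝ :=
  (attemptSet n i).indicator fun x => x.1 ^ mult k l i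

lemma measurableSet_attemptSet (n i : ℕ) : MeasurableSet (attemptSet n i) := by
  unfold attemptSet
  split_ifs
  · exact measurableSet_lt measurable_fst measurable_snd
  · exact measurableSet_le measurable_snd measurable_fst

lemma measurable_attemptFactor (n k l i : ℕ) : Measurable (attemptFactor n k l i) :=
  (measurable_fst.pow_const _).indicator (measurableSet_attemptSet n i)

section Pairs

variable {Ω : Type*} (U p : ℕ → Ω → ℝ)

lemma forall_mem_attemptSet_iff (n : ℕ) (ω : Ω) :
    (∀ i ∈ Finset.range (n + 1), (U i ω, p i ω) ∈ attemptSet n i) ↔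
      (∀ i < n, U i ω < p i ω) ∧ p n ω ≤ U n ω := by
  simp only [Finset.mem_range, Nat.lt_succ_iff_lt_or_eq, or_imp, forall_and, forall_eq,
    attemptSet, lt_irrefl, if_false]
  refine and_congr (forall₂_congr fun i hi => ?_) Iff.rfl
  simp [hi]

lemma indicator_sq_sum_eq_sum_sum_prod_attemptFactor (n : ℕ) (ω : Ω) :
    {ω | (∀ i < n, U i ω < p i ω) ∧ p n ω ≤ U n ω}.indicator
        (fun ω => (∑ k ∈ Finset.range n, U k ω) ^ 2) ω =
      ∑ k ∈ Finset.range n, ∑ l ∈ Finset.range n,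
        ∏ i ∈ Finset.range (n + 1), attemptFactor n k l i (U i ω, p i ω) := by
  simp only [Set.indicator_apply, Set.mem_ofPred_eq]
  split_ifs with hω
  · have hmem := (forall_mem_attemptSet_iff U p n ω).2 hω
    rw [sq, Finset.sum_mul_sum]
    refine Finset.sum_congr rfl fun k hk => Finset.sum_congr rfl fun l hl => ?_
    rw [Finset.mem_range] at hk hl
    rw [← prod_pow_mult (fun i => U i ω) (Nat.lt_succ_of_lt hk) (Nat.lt_succ_of_lt hl)]
    exact Finset.prod_congr rfl fun i hi =>
      (Set.indicator_of_mem (hmem i hi) (fun x => x.1 ^ _)).symm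
  · obtain ⟨i, hi, hout⟩ : ∃ i ∈ Finset.range (n + 1), (U i ω, p i ω) ∉ attemptSet n i := by
      simpa using mt (forall_mem_attemptSet_iff U p n ω).1 hω
    refine (Finset.sum_eq_zero fun k _ => Finset.sum_eq_zero fun l _ => ?_).symm
    exact Finset.prod_eq_zero hi (Set.indicator_of_notMem hout _)

def pairFamily (x : ℕ × Fin 2) : Ω → ℝ := ![U x.1, p x.1] x.2

variable {U p}

lemma measurable_pairFamily [MeasurableSpace Ω] (hU : ∀ i, Measurable (U i))
    (hp : ∀ i, Measurable (p i)) :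
    ∀ x, Measurable (pairFamily U p x) := by
  rintro ⟨i, j⟩
  fin_cases j
  exacts [hU i, hp i]

variable [MeasurableSpace Ω]

noncomputable def truncatedMoment (U p : ℕ → Ω → ℝ) (P : Measure Ω) (j : ℕ) : ℝ :=
  ∫ ω, {ω | U 0 ω < p 0 ω}.indicator (fun ω => U 0 ω ^ j) ω ∂P

variable {P : Measure Ω}

lemma truncatedMoment_zero (hU : Measurable (U 0)) (hp : Measurable (p 0)) :
    truncatedMoment U p P 0 = P.real {ω | U 0 ω < p 0 ω} := by
  simp only [truncatedMoment, pow_zero]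
  exact integral_indicator_one (measurableSet_lt hU hp)

lemma integral_attemptFactor [IsProbabilityMeasure P] (hU : Measurable (U 0))
    (hp : Measurable (p 0)) {n k l : ℕ} (hk : k < n) (hl : l < n) (i : ℕ) :
    ∫ ω, attemptFactor n k l i (U 0 ω, p 0 ω) ∂P =
      if i < n then truncatedMoment U p P (mult k l i) else 1 - truncatedMoment U p P 0 := by
  simp only [attemptFactor, attemptSet]
  split_ifs with hi
  · rfl
  · rw [mult_of_ne (by omega) (by omega), truncatedMoment_zero hU hp,
      ← probReal_compl_eq_one_sub (measurableSet_lt hU hp)]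
    have hcompl : {ω | U 0 ω < p 0 ω}ᶜ = {ω | p 0 ω ≤ U 0 ω} := by ext; simp
    rw [hcompl, ← integral_indicator_one (measurableSet_le hp hU)]
    simp only [pow_zero]
    rfl

lemma integrable_attemptFactor [IsFiniteMeasure P] (hU : Measurable (U 0))
    (hp : Measurable (p 0))
    (hbint : Integrable ({ω | U 0 ω < p 0 ω}.indicator (U 0)) P)
    (hdint : Integrable ({ω | U 0 ω < p 0 ω}.indicator (fun ω => (U 0 ω) ^ 2)) P)
    {n k l : ℕ} (hk : k < n) (hl : l < n) (i : ℕ) :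
    Integrable (fun ω => attemptFactor n k l i (U 0 ω, p 0 ω)) P := by
  simp only [attemptFactor, attemptSet]
  split_ifs with hi
  · change Integrable ({ω | U 0 ω < p 0 ω}.indicator fun ω => U 0 ω ^ mult k l i) P
    have hmult : mult k l i ≤ 2 := by unfold mult; split_ifs <;> simp
    interval_cases mult k l i
    · simpa using (integrable_const (1 : ℝ)).indicator (measurableSet_lt hU hp)
    · simpa using hbint
    · exact hdint
  · rw [mult_of_ne (by omega) (by omega)]
    change Integrable ({ω | p 0 ω ≤ U 0 ω}.indicator fun ω => U 0 ω ^ 0) P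
    simpa using (integrable_const (1 : ℝ)).indicator (measurableSet_le hp hU)

variable [IsProbabilityMeasure P]

lemma integral_prod_attemptFactor (hind : iIndepFun (pairFamily U p) P)
    (hU : ∀ i, Measurable (U i)) (hp : ∀ i, Measurable (p i))
    (hV : ∀ i, IdentDistrib (fun ω => (U i ω, p i ω)) (fun ω => (U 0 ω, p 0 ω)) P P)
    {n k l : ℕ} (hk : k < n) (hl : l < n) :
    ∫ ω, ∏ i ∈ Finset.range (n + 1), attemptFactor n k l i (U i ω, p i ω) ∂P =
      (∏ i ∈ Finset.range n, truncatedMoment U p P (mult k l i)) *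
        (1 - truncatedMoment U p P 0) := by
  refine (hind.integral_finsetProd_rows (measurable_pairFamily hU hp)
    (φ := fun i y => attemptFactor n k l i (y 0, y 1))
    (fun i => (measurable_attemptFactor n k l i).comp
      ((measurable_pi_apply 0).prodMk (measurable_pi_apply 1))) _).trans ?_
  have hfactor : ∀ i, ∫ ω, attemptFactor n k l i (U i ω, p i ω) ∂P =
      if i < n then truncatedMoment U p P (mult k l i) else 1 - truncatedMoment U p P 0 :=
    fun i => ((hV i).comp (measurable_attemptFactor n k l i)).integral_eq.trans
      (integral_attemptFactor (hU 0) (hp 0) hk hl i)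
  rw [Finset.prod_range_succ]
  congr 1
  · exact Finset.prod_congr rfl fun i hi => (hfactor i).trans (if_pos (Finset.mem_range.1 hi))
  · exact (hfactor n).trans (if_neg (lt_irrefl n))

lemma integral_indicator_sq_sum (hind : iIndepFun (pairFamily U p) P)
    (hU : ∀ i, Measurable (U i)) (hp : ∀ i, Measurable (p i))
    (hV : ∀ i, IdentDistrib (fun ω => (U i ω, p i ω)) (fun ω => (U 0 ω, p 0 ω)) P P)
    (hbint : Integrable ({ω | U 0 ω < p 0 ω}.indicator (U 0)) P)
    (hdint : Integrable ({ω | U 0 ω < p 0 ω}.indicator (fun ω => (U 0 ω) ^ 2)) P) (n : ℕ) :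
    ∫ ω, {ω | (∀ i < n, U i ω < p i ω) ∧ p n ω ≤ U n ω}.indicator
        (fun ω => (∑ k ∈ Finset.range n, U k ω) ^ 2) ω ∂P =
      (n * (truncatedMoment U p P 2 * truncatedMoment U p P 0 ^ (n - 1)) +
        n * (n - 1) * (truncatedMoment U p P 1 ^ 2 * truncatedMoment U p P 0 ^ (n - 2))) *
        (1 - truncatedMoment U p P 0) := by
  have hint : ∀ k ∈ Finset.range n, ∀ l ∈ Finset.range n, Integrable
      (fun ω => ∏ i ∈ Finset.range (n + 1), attemptFactor n k l i (U i ω, p i ω)) P := by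
    intro k hk l hl
    exact hind.integrable_finsetProd_rows (measurable_pairFamily hU hp)
      (φ := fun i y => attemptFactor n k l i (y 0, y 1))
      (fun i => (measurable_attemptFactor n k l i).comp
        ((measurable_pi_apply 0).prodMk (measurable_pi_apply 1)))
      (fun i => ((hV i).comp (measurable_attemptFactor n k l i)).integrable_iff.2
        (integrable_attemptFactor (hU 0) (hp 0) hbint hdint (Finset.mem_range.1 hk)
          (Finset.mem_range.1 hl) i)) _
  rw [integral_congr_ae (ae_of_all _ (indicator_sq_sum_eq_sum_sum_prod_attemptFactor U p n)),
    integral_finsetSum _ fun k hk => integrable_finsetSum _ (hint k hk)]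
  calc ∑ k ∈ Finset.range n, ∫ ω, ∑ l ∈ Finset.range n,
        ∏ i ∈ Finset.range (n + 1), attemptFactor n k l i (U i ω, p i ω) ∂P
      = ∑ k ∈ Finset.range n, ∑ l ∈ Finset.range n,
          (if k = l then truncatedMoment U p P 2 * truncatedMoment U p P 0 ^ (n - 1)
            else truncatedMoment U p P 1 ^ 2 * truncatedMoment U p P 0 ^ (n - 2)) *
          (1 - truncatedMoment U p P 0) := by
        refine Finset.sum_congr rfl fun k hk => ?_
        rw [integral_finsetSum _ (hint k hk)]
        refine Finset.sum_congr rfl fun l hl => ?_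
        rw [integral_prod_attemptFactor hind hU hp hV (Finset.mem_range.1 hk)
          (Finset.mem_range.1 hl), prod_range_apply_mult _ (Finset.mem_range.1 hk)
          (Finset.mem_range.1 hl)]
    _ = _ := by simp_rw [← Finset.sum_mul, Finset.sum_range_sum_range_ite_eq]

end Pairs

end PreemptRepeat

open PreemptRepeat

/- Indices start at `0`: the paper's `U_1, …, U_{n-1}` and `U_n` are `U 0, …, U (n-1)` and
`U n` here, so the paper's `n ≥ 3` becomes `n ≥ 2`. -/
theorem stmt6_general
    {Ω : Type*} [MeasurableSpace Ω] (P : Measure Ω) [IsProbabilityMeasure P]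
    (U D p : ℕ → Ω → ℝ)
    (hUmeas : ∀ k, Measurable (U k))
    (hpmeas : ∀ k, Measurable (p k))
    (hindep : iIndepFun
      (fun i : ℕ × Fin 3 => ![U i.1, D i.1, p i.1] i.2) P)
    (hUid : ∀ k, IdentDistrib (U k) (U 0) P P)
    (hpid : ∀ k, IdentDistrib (p k) (p 0) P P)
    (A : ℕ → Set Ω)
    (hA : ∀ n, A n = {ω | (∀ i < n, U i ω < p i ω) ∧ p n ω ≤ U n ω})
    (q : ℝ) (hq : q = (P {ω | U 0 ω < p 0 ω}).toReal)
    (hq0 : 0 < q)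
    (hbint : Integrable ({ω | U 0 ω < p 0 ω}.indicator (U 0)) P)
    (hdint : Integrable ({ω | U 0 ω < p 0 ω}.indicator (fun ω => (U 0 ω) ^ 2)) P)
    (b : ℝ) (hb : b = (∫ ω, {ω | U 0 ω < p 0 ω}.indicator (U 0) ω ∂P) / q)
    (d : ℝ) (hd : d = (∫ ω, {ω | U 0 ω < p 0 ω}.indicator (fun ω => (U 0 ω) ^ 2) ω ∂P) / q) :
    ∀ n, 2 ≤ n →
      ∫ ω, (A n).indicator (fun ω => (∑ k ∈ Finset.range n, U k ω) ^ 2) ω ∂P =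
        (n : ℝ) * d * (1 - q) * q ^ n
          + (n : ℝ) * ((n : ℝ) - 1) * b ^ 2 * (1 - q) * q ^ n := by
  intro n hn
  have hpairs : iIndepFun (pairFamily U p) P := by
    have hinj : Function.Injective (Prod.map (id : ℕ → ℕ) ![(0 : Fin 3), 2]) :=
      Function.injective_id.prodMap (by decide)
    convert hindep.precomp hinj using 1
    ext ⟨i, j⟩ ω
    fin_cases j <;> rfl
  have hV : ∀ i, IdentDistrib (fun ω => (U i ω, p i ω)) (fun ω => (U 0 ω, p 0 ω)) P P :=
    fun i => (hUid i).prodMk (hpid i) (hpairs.indepFun (i := (i, 0)) (j := (i, 1)) (by simp))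
      (hpairs.indepFun (i := (0, 0)) (j := (0, 1)) (by simp))
  have hM0 : truncatedMoment U p P 0 = q := by
    rw [truncatedMoment_zero (hUmeas 0) (hpmeas 0), hq, measureReal_def]
  have hM1 : truncatedMoment U p P 1 = b * q := by
    rw [hb, div_mul_cancel₀ _ hq0.ne']
    simp [truncatedMoment]
  have hM2 : truncatedMoment U p P 2 = d * q := by
    rw [hd, div_mul_cancel₀ _ hq0.ne']
    rfl
  rw [hA n, integral_indicator_sq_sum hpairs hUmeas hpmeas hV hbint hdint n, hM0, hM1, hM2]
  obtain ⟨m, rfl⟩ : ∃ m, n = m + 2 := ⟨n - 2, by omega⟩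
  simp only [Nat.add_sub_cancel, show m + 2 - 1 = m + 1 by omega]
  push_cast
  ring

/-- (Indices shifted to start at `0`: the paper's `n ≥ 3` with value
`(n-1)·d·(1-q)·q^{n-1} + (n-1)(n-2)·b²·(1-q)·q^{n-1}` becomes `n ≥ 2` with value
`n·d·(1-q)·qⁿ + n(n-1)·b²·(1-q)·qⁿ`.)
If `0 < q < 1`, `E[U₁·1_{U₁ < p₁}] < ∞` and `E[U₁²·1_{U₁ < p₁}] < ∞`, then for every
`n ≥ 3` (paper indexing), `E[(Σ_{k=1}^{n-1} U_k)²·1_{A_n}]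
  = (n-1)·d·(1-q)·q^{n-1} + (n-1)(n-2)·b²·(1-q)·q^{n-1}`. -/
theorem stmt6
    {Ω : Type*} [MeasurableSpace Ω] (P : Measure Ω) [IsProbabilityMeasure P]
    (U D p : ℕ → Ω → ℝ)
    (hUmeas : ∀ k, Measurable (U k)) (hDmeas : ∀ k, Measurable (D k))
    (hpmeas : ∀ k, Measurable (p k))
    (hUnn : ∀ k ω, 0 ≤ U k ω) (hDnn : ∀ k ω, 0 ≤ D k ω) (hpnn : ∀ k ω, 0 ≤ p k ω)
    (hindep : iIndepFun
      (fun i : ℕ × Fin 3 => ![U i.1, D i.1, p i.1] i.2) P)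
    (hUid : ∀ k, IdentDistrib (U k) (U 0) P P)
    (hDid : ∀ k, IdentDistrib (D k) (D 0) P P)
    (hpid : ∀ k, IdentDistrib (p k) (p 0) P P)
    (A : ℕ → Set Ω)
    (hA : ∀ n, A n = {ω | (∀ i < n, U i ω < p i ω) ∧ p n ω ≤ U n ω})
    (q : ℝ) (hq : q = (P {ω | U 0 ω < p 0 ω}).toReal)
    (hq0 : 0 < q) (hq1 : q < 1)
    (hbint : Integrable ({ω | U 0 ω < p 0 ω}.indicator (U 0)) P)
    (hdint : Integrable ({ω | U 0 ω < p 0 ω}.indicator (fun ω => (U 0 ω) ^ 2)) P)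
    (b : ℝ) (hb : b = (∫ ω, {ω | U 0 ω < p 0 ω}.indicator (U 0) ω ∂P) / q)
    (d : ℝ) (hd : d = (∫ ω, {ω | U 0 ω < p 0 ω}.indicator (fun ω => (U 0 ω) ^ 2) ω ∂P) / q) :
    ∀ n, 2 ≤ n →
      ∫ ω, (A n).indicator (fun ω => (∑ k ∈ Finset.range n, U k ω) ^ 2) ω ∂P =
        (n : ℝ) * d * (1 - q) * q ^ n
          + (n : ℝ) * ((n : ℝ) - 1) * b ^ 2 * (1 - q) * q ^ n :=
  stmt6_general P U D p hUmeas hpmeas hindep hUid hpid A hA q hq hq0 hbint hdint b hb d hd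
end

section
/- Suppose each uptime U_k follows the exponential distribution with rate parameter λ > 0, each downtime D_k has finite mean E[D_1] = μ, and each processing time is the constant p_k = t with t > 0. Then the expected completion time satisfies E[R] = (1/λ + μ)·(e^{λt} − 1). -/
open MeasureTheory ProbabilityTheory Real Set
open scoped ENNReal

/-!
Let `q = e^{-λt}` be the probability that an uptime covers the job. The job is completed in the
`n`-th uptime exactly on the event `A n` that the first `n` uptimes are shorter than `t` and the
next one is not; by independence `P(A n) = (1 - q)^n q`, so `⋃ A n` has full measure. On `A n`
each of the first `n` downtimes still has mean `μ`, and each of the first `n` uptimes has the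
mean `m = 1/λ - t/(e^{λt} - 1)` of the exponential law conditioned on `[0, t)`. Hence
`E[R] = Σ (t + n (m + μ)) (1 - q)^n q = t + (m + μ)(e^{λt} - 1) = (1/λ + μ)(e^{λt} - 1)`.
-/

namespace ProbabilityTheory.iIndepFun

variable {ι Ω : Type*} {β : ι → Type*} [MeasurableSpace Ω] [∀ i, MeasurableSpace (β i)]
  {P : Measure Ω} {f : ∀ i, Ω → β i} {g : ∀ i, β i → ℝ≥0∞}

theorem lintegral_prod_comp (hf : iIndepFun f P) (hfm : ∀ i, Measurable (f i))
    (hg : ∀ i, Measurable (g i)) (s : Finset ι) :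
    ∫⁻ ω, ∏ i ∈ s, g i (f i ω) ∂P = ∏ i ∈ s, ∫⁻ ω, g i (f i ω) ∂P :=
  lintegral_prod_eq_prod_lintegral_of_indepFun s (fun i ω => g i (f i ω)) (hf.comp g hg)
    fun i => (hg i).comp (hfm i)

theorem lintegral_prod_comp_mul_comp (hf : iIndepFun f P) (hfm : ∀ i, Measurable (f i))
    (hg : ∀ i, Measurable (g i)) {s : Finset ι} {j : ι} (hj : j ∉ s) {h : β j → ℝ≥0∞}
    (hh : Measurable h) :
    ∫⁻ ω, h (f j ω) * ∏ i ∈ s, g i (f i ω) ∂P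
      = (∫⁻ ω, h (f j ω) ∂P) * ∫⁻ ω, ∏ i ∈ s, g i (f i ω) ∂P := by
  classical
  have hg' : ∀ i, Measurable (Function.update g j h i) := by
    intro i
    rcases eq_or_ne i j with rfl | hi
    · simpa using hh
    · simpa [hi] using hg i
  have hs : ∀ i ∈ s, Function.update g j h i = g i :=
    fun i hi => Function.update_of_ne (ne_of_mem_of_not_mem hi hj) _ _
  have key := hf.lintegral_prod_comp hfm hg' (insert j s)
  simp only [Finset.prod_insert hj, Function.update_self] at key
  have hprod : ∀ ω, ∏ i ∈ s, Function.update g j h i (f i ω) = ∏ i ∈ s, g i (f i ω) :=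
    fun ω => Finset.prod_congr rfl fun i hi => by rw [hs i hi]
  have hprod_lintegral : ∏ i ∈ s, ∫⁻ ω, Function.update g j h i (f i ω) ∂P
      = ∏ i ∈ s, ∫⁻ ω, g i (f i ω) ∂P :=
    Finset.prod_congr rfl fun i hi => by rw [hs i hi]
  simp only [hprod, hprod_lintegral] at key
  rw [key, hf.lintegral_prod_comp hfm hg s]

end ProbabilityTheory.iIndepFun

lemma hasSum_affine_mul_geometric {q : ℝ} (hq0 : 0 < q) (hq1 : q ≤ 1) (c d : ℝ) :
    HasSum (fun n : ℕ => (c + n * d) * ((1 - q) ^ n * q)) (c + d * (1 - q) / q) := by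
  have h0 : 0 ≤ 1 - q := by linarith
  have h1 : 1 - q < 1 := by linarith
  have hgeom := (hasSum_geometric_of_lt_one h0 h1).mul_left (c * q)
  have hcoe := (hasSum_coe_mul_geometric_of_norm_lt_one
    (by rwa [Real.norm_of_nonneg h0])).mul_left (d * q)
  have hsum : c * q * (1 - (1 - q))⁻¹ + d * q * ((1 - q) / (1 - (1 - q)) ^ 2)
      = c + d * (1 - q) / q := by
    rw [sub_sub_cancel]
    field_simp
  rw [← hsum]
  exact (hgeom.add hcoe).congr_fun fun n => by ring

section Exponential

variable {l t : ℝ}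

instance (l : ℝ) : NullSingletonClass (expMeasure l) :=
  inferInstanceAs (NullSingletonClass (volume.withDensity (gammaPDF 1 l)))

lemma one_sub_exp_neg_mul_pos (hl : 0 < l) (ht : 0 < t) : 0 < 1 - exp (-(l * t)) :=
  sub_pos.2 (exp_lt_one_iff.2 (neg_lt_zero.2 (mul_pos hl ht)))

lemma expMeasure_Iio (hl : 0 < l) (ht : 0 ≤ t) :
    expMeasure l (Iio t) = ENNReal.ofReal (1 - exp (-(l * t))) := by
  have := isProbabilityMeasure_expMeasure hl
  rw [measure_congr Iio_ae_eq_Iic, ← ofReal_cdf, cdf_expMeasure_eq hl, if_pos ht]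

lemma expMeasure_Ici (hl : 0 < l) (ht : 0 ≤ t) :
    expMeasure l (Ici t) = ENNReal.ofReal (exp (-(l * t))) := by
  have := isProbabilityMeasure_expMeasure hl
  rw [← compl_Iio, prob_compl_eq_one_sub measurableSet_Iio, expMeasure_Iio hl ht,
    ← ENNReal.ofReal_one, ← ENNReal.ofReal_sub _
      (sub_nonneg.2 (exp_le_one_iff.2 (neg_nonpos.2 (mul_nonneg hl.le ht)))), sub_sub_cancel]

lemma hasDerivAt_truncatedMean_expMeasure (hl : l ≠ 0) (x : ℝ) :
    HasDerivAt (fun x => -((x + 1 / l) * exp (-(l * x)))) (l * exp (-(l * x)) * x) x := by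
  refine (((hasDerivAt_id x).add_const (1 / l)).fun_mul
    ((hasDerivAt_id x).const_mul l).fun_neg.exp).fun_neg.congr_deriv ?_
  simp only [id]
  field_simp
  ring

lemma setLIntegral_Iio_ofReal_expMeasure (hl : 0 < l) (ht : 0 < t) :
    ∫⁻ x in Iio t, ENNReal.ofReal x ∂expMeasure l
      = ENNReal.ofReal ((1 - exp (-(l * t))) / l - t * exp (-(l * t))) := by
  have hnull : expMeasure l (Iic 0) = 0 := by
    simp [← measure_congr Iio_ae_eq_Iic, expMeasure_Iio hl le_rfl]
  have hpdf_meas : Measurable (gammaPDF 1 l) := (measurable_gammaPDFReal 1 l).ennreal_ofReal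
  rw [← Iic_union_Ioo_eq_Iio ht, lintegral_union measurableSet_Ioo
    (Iic_disjoint_Ioi le_rfl |>.mono_right Ioo_subset_Ioi_self),
    setLIntegral_measure_zero _ _ hnull, zero_add, expMeasure, gammaMeasure,
    restrict_withDensity measurableSet_Ioo, lintegral_withDensity_eq_lintegral_mul _
      hpdf_meas ENNReal.measurable_ofReal]
  have hF : Continuous fun x => l * exp (-(l * x)) * x := by fun_prop
  have hpdf : ∀ x ∈ Ioo 0 t, (gammaPDF 1 l * ENNReal.ofReal) x
      = ENNReal.ofReal (l * exp (-(l * x)) * x) := fun x hx => by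
    rw [Pi.mul_apply, show gammaPDF 1 l x = exponentialPDF l x from rfl,
      exponentialPDF_of_nonneg hx.1.le, ← ENNReal.ofReal_mul (by positivity)]
  rw [setLIntegral_congr_fun measurableSet_Ioo hpdf, ← ofReal_integral_eq_lintegral_ofReal
    (hF.integrableOn_Icc.mono_set Ioo_subset_Icc_self)
    (ae_restrict_of_forall_mem measurableSet_Ioo fun x hx => by have := hx.1; positivity),
    ← integral_Ioc_eq_integral_Ioo, ← intervalIntegral.integral_of_le ht.le,
    intervalIntegral.integral_eq_sub_of_hasDerivAt
      (fun x _ => hasDerivAt_truncatedMean_expMeasure hl.ne' x) (hF.intervalIntegrable 0 t)]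
  congr 1
  simp only [mul_zero, neg_zero, exp_zero]
  field_simp
  ring

lemma div_exp_mul_sub_one_le (hl : 0 < l) (ht : 0 < t) : t / (exp (l * t) - 1) ≤ 1 / l := by
  have hpos : 0 < exp (l * t) - 1 := sub_pos.2 (one_lt_exp_iff.2 (mul_pos hl ht))
  rw [div_le_div_iff₀ hpos hl]
  linarith [add_one_le_exp (l * t)]

lemma setLIntegral_Iio_ofReal_expMeasure_div (hl : 0 < l) (ht : 0 < t) :
    (∫⁻ x in Iio t, ENNReal.ofReal x ∂expMeasure l) / expMeasure l (Iio t)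
      = ENNReal.ofReal (1 / l - t / (exp (l * t) - 1)) := by
  have hq : 0 < 1 - exp (-(l * t)) := one_sub_exp_neg_mul_pos hl ht
  rw [setLIntegral_Iio_ofReal_expMeasure hl ht, expMeasure_Iio hl ht.le,
    ← ENNReal.ofReal_div_of_pos hq]
  have hpos : 0 < exp (l * t) - 1 := sub_pos.2 (one_lt_exp_iff.2 (mul_pos hl ht))
  rw [exp_neg] at hq ⊢
  field_simp

lemma tsum_ofReal_completionTime_expMeasure {l t μ : ℝ} (hl : 0 < l) (ht : 0 < t)
    (hμ : 0 ≤ μ) :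
    ∑' n : ℕ, ENNReal.ofReal ((t + n * (1 / l - t / (exp (l * t) - 1) + μ))
        * ((1 - exp (-(l * t))) ^ n * exp (-(l * t))))
      = ENNReal.ofReal ((1 / l + μ) * (exp (l * t) - 1)) := by
  have hq := one_sub_exp_neg_mul_pos hl ht
  have hm := sub_nonneg.2 (div_exp_mul_sub_one_le hl ht)
  have hsum := hasSum_affine_mul_geometric (exp_pos (-(l * t))) (sub_pos.1 hq).le t
    (1 / l - t / (exp (l * t) - 1) + μ)
  have hpos : 0 < exp (l * t) - 1 := sub_pos.2 (one_lt_exp_iff.2 (mul_pos hl ht))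
  rw [← ENNReal.ofReal_tsum_of_nonneg (fun n => by positivity) hsum.summable, hsum.tsum_eq,
    exp_neg, div_inv_eq_mul, mul_assoc, one_sub_mul, inv_mul_cancel₀ (exp_pos _).ne', add_mul,
    sub_mul, div_mul_cancel₀ _ hpos.ne']
  congr 1
  ring

end Exponential

section FirstPassage

variable {Ω : Type*} {V : ℕ → Ω → ℝ} {t : ℝ} {n : ℕ}

def firstPassage (V : ℕ → Ω → ℝ) (t : ℝ) (n : ℕ) : Set Ω :=
  {ω | (∀ i < n, V i ω < t) ∧ t ≤ V n ω}

noncomputable def passageWeight (t : ℝ) (n i : ℕ) : ℝ → ℝ≥0∞ :=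
  if i < n then (Iio t).indicator 1 else (Ici t).indicator 1

lemma passageWeight_of_lt {i : ℕ} (hi : i < n) : passageWeight t n i = (Iio t).indicator 1 :=
  if_pos hi

lemma passageWeight_self : passageWeight t n n = (Ici t).indicator 1 :=
  if_neg (lt_irrefl n)

lemma measurable_passageWeight (t : ℝ) (n i : ℕ) : Measurable (passageWeight t n i) := by
  unfold passageWeight
  split_ifs
  exacts [measurable_one.indicator measurableSet_Iio, measurable_one.indicator measurableSet_Ici]

lemma pairwise_disjoint_firstPassage (V : ℕ → Ω → ℝ) (t : ℝ) :
    Pairwise (Function.onFun Disjoint (firstPassage V t)) :=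
  (pairwise_disjoint_on _).2 fun m _ hmn =>
    disjoint_left.2 fun _ hm hn => (hn.1 m hmn).not_ge hm.2

lemma indicator_firstPassage (ω : Ω) :
    (firstPassage V t n).indicator 1 ω
      = ∏ i ∈ Finset.range (n + 1), passageWeight t n i (V i ω) := by
  rw [Finset.prod_range_succ, passageWeight_self,
    Finset.prod_congr rfl fun i hi => by rw [passageWeight_of_lt (Finset.mem_range.1 hi)]]
  simp only [firstPassage, indicator_apply, mem_ofPred_eq, Pi.one_apply, mem_Iio,
    Finset.prod_boole, Finset.mem_range, mem_Ici, mul_ite, mul_one, mul_zero]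
  split_ifs <;> tauto

variable [MeasurableSpace Ω] {P : Measure Ω} {ν : Measure ℝ}

lemma measurableSet_firstPassage (hVm : ∀ i, Measurable (V i)) (t : ℝ) (n : ℕ) :
    MeasurableSet (firstPassage V t n) := by
  unfold firstPassage
  measurability

lemma lintegral_passageWeight (hVm : ∀ i, Measurable (V i)) (hVlaw : ∀ i, P.map (V i) = ν)
    (i : ℕ) :
    ∫⁻ ω, passageWeight t n i (V i ω) ∂P = if i < n then ν (Iio t) else ν (Ici t) := by
  rw [← lintegral_map (measurable_passageWeight t n i) (hVm i), hVlaw i, passageWeight]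
  split_ifs
  exacts [lintegral_indicator_one measurableSet_Iio, lintegral_indicator_one measurableSet_Ici]

lemma measure_firstPassage (hV : iIndepFun V P) (hVm : ∀ i, Measurable (V i))
    (hVlaw : ∀ i, P.map (V i) = ν) :
    P (firstPassage V t n) = ν (Iio t) ^ n * ν (Ici t) := by
  rw [← lintegral_indicator_one (measurableSet_firstPassage hVm t n)]
  simp only [indicator_firstPassage]
  rw [hV.lintegral_prod_comp hVm (measurable_passageWeight t n), Finset.prod_range_succ,
    lintegral_passageWeight hVm hVlaw, if_neg (lt_irrefl n),
    Finset.prod_congr rfl fun i hi => by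
      rw [lintegral_passageWeight hVm hVlaw, if_pos (Finset.mem_range.1 hi)],
    Finset.prod_const, Finset.card_range]

lemma measure_compl_iUnion_firstPassage (hV : iIndepFun V P) (hVm : ∀ i, Measurable (V i))
    (hVlaw : ∀ i, P.map (V i) = ν) (hν : ν (Ici t) ≠ 0) :
    P (⋃ n, firstPassage V t n)ᶜ = 0 := by
  have := hV.isProbabilityMeasure
  have : IsProbabilityMeasure ν :=
    hVlaw 0 ▸ Measure.isProbabilityMeasure_map (hVm 0).aemeasurable
  rw [prob_compl_eq_zero_iff (MeasurableSet.iUnion (measurableSet_firstPassage hVm t)),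
    measure_iUnion (pairwise_disjoint_firstPassage V t) (measurableSet_firstPassage hVm t)]
  simp only [measure_firstPassage hV hVm hVlaw]
  rw [ENNReal.tsum_mul_right, ENNReal.tsum_geometric,
    ← prob_compl_eq_one_sub measurableSet_Iio, compl_Iio,
    ENNReal.inv_mul_cancel hν (measure_ne_top _ _)]

/-- The indicator of the event is `1{V k < t}` times a function of the other `V i`, which is
independent of `V k`. -/
lemma setLIntegral_firstPassage_ofReal (hV : iIndepFun V P) (hVm : ∀ i, Measurable (V i))
    (hVlaw : ∀ i, P.map (V i) = ν) [IsFiniteMeasure ν] (hν : ν (Iio t) ≠ 0) {k : ℕ}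
    (hk : k < n) :
    ∫⁻ ω in firstPassage V t n, ENNReal.ofReal (V k ω) ∂P
      = (∫⁻ x in Iio t, ENNReal.ofReal x ∂ν) / ν (Iio t) * P (firstPassage V t n) := by
  set E := firstPassage V t n
  have hE := measurableSet_firstPassage hVm t n
  set s := (Finset.range (n + 1)).erase k
  have hks : k ∉ s := Finset.notMem_erase k _
  set G := ∫⁻ ω, ∏ i ∈ s, passageWeight t n i (V i ω) ∂P
  have hsplit : ∀ ω, E.indicator 1 ω
      = (Iio t).indicator 1 (V k ω) * ∏ i ∈ s, passageWeight t n i (V i ω) := fun ω => by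
    rw [indicator_firstPassage,
      ← Finset.mul_prod_erase _ _ (Finset.mem_range.2 (by omega : k < n + 1)),
      passageWeight_of_lt hk]
  have hPE : P E = ν (Iio t) * G := by
    rw [← lintegral_indicator_one hE, lintegral_congr hsplit,
      hV.lintegral_prod_comp_mul_comp hVm (measurable_passageWeight t n) hks
        (measurable_one.indicator measurableSet_Iio),
      ← lintegral_map (measurable_one.indicator measurableSet_Iio) (hVm k), hVlaw,
      lintegral_indicator_one measurableSet_Iio]
  have hsplit' : ∀ ω, E.indicator (fun ω => ENNReal.ofReal (V k ω)) ω
      = (Iio t).indicator ENNReal.ofReal (V k ω) * ∏ i ∈ s, passageWeight t n i (V i ω) :=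
    fun ω => by
      have : E.indicator (fun ω => ENNReal.ofReal (V k ω)) ω
          = E.indicator 1 ω * ENNReal.ofReal (V k ω) := by
        by_cases h : ω ∈ E <;> simp [h]
      rw [this, hsplit, mul_right_comm]
      by_cases h : V k ω < t <;> simp [h]
  rw [← lintegral_indicator hE, lintegral_congr hsplit',
    hV.lintegral_prod_comp_mul_comp hVm (measurable_passageWeight t n) hks
      (ENNReal.measurable_ofReal.indicator measurableSet_Iio),
    ← lintegral_map (ENNReal.measurable_ofReal.indicator measurableSet_Iio) (hVm k), hVlaw,
    lintegral_indicator measurableSet_Iio, hPE, ← mul_assoc,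
    ENNReal.div_mul_cancel hν (measure_ne_top _ _)]

lemma setLIntegral_firstPassage_comp_of_ne {κ : Type*} {X : ℕ × κ → Ω → ℝ}
    (hX : iIndepFun X P) (hXm : ∀ e, Measurable (X e)) {u d : κ} (hdu : d ≠ u) (k : ℕ)
    {h : ℝ → ℝ≥0∞} (hh : Measurable h) :
    ∫⁻ ω in firstPassage (fun i => X (i, u)) t n, h (X (k, d) ω) ∂P
      = P (firstPassage (fun i => X (i, u)) t n) * ∫⁻ ω, h (X (k, d) ω) ∂P := by
  set E := firstPassage (fun i => X (i, u)) t n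
  have hE := measurableSet_firstPassage (fun i => hXm (i, u)) t n
  set s := (Finset.range (n + 1)).map ⟨fun i => (i, u), Prod.mk_left_injective u⟩
  have hprod : ∀ ω, E.indicator 1 ω = ∏ e ∈ s, passageWeight t n e.1 (X e ω) := fun ω => by
    rw [Finset.prod_map, indicator_firstPassage]
    rfl
  have hks : (k, d) ∉ s := by simp [s, hdu.symm]
  have hsplit : ∀ ω, E.indicator (fun ω => h (X (k, d) ω)) ω
      = h (X (k, d) ω) * ∏ e ∈ s, passageWeight t n e.1 (X e ω) := fun ω => by
    rw [← hprod]
    by_cases hω : ω ∈ E <;> simp [hω]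
  rw [← lintegral_indicator hE, lintegral_congr hsplit,
    hX.lintegral_prod_comp_mul_comp hXm (fun e => measurable_passageWeight t n e.1) hks hh,
    ← lintegral_congr hprod, lintegral_indicator_one hE, mul_comm]

end FirstPassage

section CompletionTime

variable {Ω : Type*} [MeasurableSpace Ω] {P : Measure Ω}

lemma setLIntegral_ofReal_add_sum {E : Set Ω} {c : ℝ} (hc : 0 ≤ c) {n : ℕ}
    {Y Z : ℕ → Ω → ℝ} (hYm : ∀ k, Measurable (Y k)) (hZm : ∀ k, Measurable (Z k))
    (hY : ∀ k ω, 0 ≤ Y k ω) (hZ : ∀ k ω, 0 ≤ Z k ω) {α β : ℝ≥0∞}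
    (hα : ∀ k < n, ∫⁻ ω in E, ENNReal.ofReal (Y k ω) ∂P = α * P E)
    (hβ : ∀ k < n, ∫⁻ ω in E, ENNReal.ofReal (Z k ω) ∂P = β * P E) :
    ∫⁻ ω in E, ENNReal.ofReal (c + ∑ k ∈ Finset.range n, (Y k ω + Z k ω)) ∂P
      = (ENNReal.ofReal c + n * (α + β)) * P E := by
  have hsplit : ∀ ω, ENNReal.ofReal (c + ∑ k ∈ Finset.range n, (Y k ω + Z k ω))
      = ENNReal.ofReal c
        + ∑ k ∈ Finset.range n, (ENNReal.ofReal (Y k ω) + ENNReal.ofReal (Z k ω)) :=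
      fun ω => by
    rw [ENNReal.ofReal_add hc (Finset.sum_nonneg fun k _ => add_nonneg (hY k ω) (hZ k ω)),
      ENNReal.ofReal_sum_of_nonneg fun k _ => add_nonneg (hY k ω) (hZ k ω)]
    exact congrArg _ (Finset.sum_congr rfl fun k _ => ENNReal.ofReal_add (hY k ω) (hZ k ω))
  rw [lintegral_congr hsplit, lintegral_add_left measurable_const, setLIntegral_const,
    lintegral_finsetSum (f := fun k ω => ENNReal.ofReal (Y k ω) + ENNReal.ofReal (Z k ω)) _
      fun k _ => (hYm k).ennreal_ofReal.add (hZm k).ennreal_ofReal,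
    Finset.sum_congr rfl fun k hk => by
      rw [lintegral_add_left (hYm k).ennreal_ofReal, hα k (Finset.mem_range.1 hk),
        hβ k (Finset.mem_range.1 hk)],
    Finset.sum_const, Finset.card_range, nsmul_eq_mul]
  ring

lemma lintegral_tsum_indicator_add_indicator_top {E : ℕ → Set Ω} {F : ℕ → Ω → ℝ≥0∞}
    (hE : ∀ n, MeasurableSet (E n)) (hF : ∀ n, Measurable (F n))
    (hcover : P (⋃ n, E n)ᶜ = 0) :
    ∫⁻ ω, (∑' n, (E n).indicator (F n) ω) + (⋃ n, E n)ᶜ.indicator (fun _ => ⊤) ω ∂P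
      = ∑' n, ∫⁻ ω in E n, F n ω ∂P := by
  have hcompl := (MeasurableSet.iUnion hE).compl
  rw [lintegral_add_right _ (measurable_const.indicator hcompl),
    lintegral_indicator_const hcompl, hcover, mul_zero, add_zero,
    lintegral_tsum fun n => ((hF n).indicator (hE n)).aemeasurable]
  exact tsum_congr fun n => lintegral_indicator (hE n) _

lemma setLIntegral_firstPassage_completionTime {ν : Measure ℝ} [IsFiniteMeasure ν]
    {κ : Type*} {X : ℕ × κ → Ω → ℝ} (hX : iIndepFun X P) (hXm : ∀ e, Measurable (X e))
    {u d : κ} (hdu : d ≠ u) (hXlaw : ∀ i, P.map (X (i, u)) = ν) {t : ℝ} (ht : 0 ≤ t)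
    (hν : ν (Iio t) ≠ 0) (hu : ∀ k ω, 0 ≤ X (k, u) ω) (hd : ∀ k ω, 0 ≤ X (k, d) ω)
    {β : ℝ≥0∞} (hβ : ∀ k, ∫⁻ ω, ENNReal.ofReal (X (k, d) ω) ∂P = β) (n : ℕ) :
    ∫⁻ ω in firstPassage (fun i => X (i, u)) t n,
        ENNReal.ofReal (t + ∑ k ∈ Finset.range n, (X (k, u) ω + X (k, d) ω)) ∂P
      = (ENNReal.ofReal t + n * ((∫⁻ x in Iio t, ENNReal.ofReal x ∂ν) / ν (Iio t) + β))
        * (ν (Iio t) ^ n * ν (Ici t)) := by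
  have hV : iIndepFun (fun i => X (i, u)) P := (hX.precomp (Prod.mk_left_injective u) :)
  rw [setLIntegral_ofReal_add_sum ht (fun k => hXm _) (fun k => hXm _) hu hd
      (fun k hk => setLIntegral_firstPassage_ofReal hV (fun i => hXm _) hXlaw hν hk)
      (fun k _ => by
        rw [setLIntegral_firstPassage_comp_of_ne hX hXm hdu k ENNReal.measurable_ofReal, hβ k,
          mul_comm]),
    measure_firstPassage hV (fun i => hXm _) hXlaw]

lemma setLIntegral_firstPassage_completionTime_expMeasure {κ : Type*} {X : ℕ × κ → Ω → ℝ}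
    (hX : iIndepFun X P) (hXm : ∀ e, Measurable (X e)) {u d : κ} (hdu : d ≠ u) {l t : ℝ}
    (hl : 0 < l) (ht : 0 < t) (hXlaw : ∀ i, P.map (X (i, u)) = expMeasure l)
    (hu : ∀ k ω, 0 ≤ X (k, u) ω) (hd : ∀ k ω, 0 ≤ X (k, d) ω) {μ : ℝ} (hμ : 0 ≤ μ)
    (hmean : ∀ k, ∫⁻ ω, ENNReal.ofReal (X (k, d) ω) ∂P = ENNReal.ofReal μ) (n : ℕ) :
    ∫⁻ ω in firstPassage (fun i => X (i, u)) t n,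
        ENNReal.ofReal (t + ∑ k ∈ Finset.range n, (X (k, u) ω + X (k, d) ω)) ∂P
      = ENNReal.ofReal ((t + n * (1 / l - t / (exp (l * t) - 1) + μ))
          * ((1 - exp (-(l * t))) ^ n * exp (-(l * t)))) := by
  have := isProbabilityMeasure_expMeasure hl
  have hq := one_sub_exp_neg_mul_pos hl ht
  have hm := sub_nonneg.2 (div_exp_mul_sub_one_le hl ht)
  rw [setLIntegral_firstPassage_completionTime hX hXm hdu hXlaw ht.le
      (by rw [expMeasure_Iio hl ht.le]; exact (ENNReal.ofReal_pos.2 hq).ne') hu hd hmean n,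
    setLIntegral_Iio_ofReal_expMeasure_div hl ht, expMeasure_Iio hl ht.le,
    expMeasure_Ici hl ht.le, ← ENNReal.ofReal_add hm hμ, ← ENNReal.ofReal_natCast,
    ← ENNReal.ofReal_mul (Nat.cast_nonneg _), ← ENNReal.ofReal_add ht.le (by positivity),
    ← ENNReal.ofReal_pow hq.le, ← ENNReal.ofReal_mul (by positivity),
    ← ENNReal.ofReal_mul (by positivity)]

end CompletionTime

theorem stmt11_general
    {Ω : Type*} [MeasurableSpace Ω] (P : Measure Ω) [IsProbabilityMeasure P]
    (U D p : ℕ → Ω → ℝ)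
    (hUmeas : ∀ k, Measurable (U k)) (hDmeas : ∀ k, Measurable (D k))
    (hUnn : ∀ k ω, 0 ≤ U k ω) (hDnn : ∀ k ω, 0 ≤ D k ω)
    (hindep : iIndepFun
      (fun i : ℕ × Fin 3 => ![U i.1, D i.1, p i.1] i.2) P)
    (hDid : ∀ k, IdentDistrib (D k) (D 0) P P)
    (A : ℕ → Set Ω)
    (hA : ∀ n, A n = {ω | (∀ i < n, U i ω < p i ω) ∧ p n ω ≤ U n ω})
    (R : Ω → ℝ≥0∞)
    (hR : ∀ ω, R ω =
      (∑' n, Set.indicator (A n)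
        (fun ω => ENNReal.ofReal (p n ω + ∑ k ∈ Finset.range n, (U k ω + D k ω))) ω)
      + Set.indicator (⋃ n, A n)ᶜ (fun _ => (⊤ : ℝ≥0∞)) ω)
    (l t : ℝ) (hl : 0 < l) (ht : 0 < t)
    (hUexp : ∀ k, Measure.map (U k) P = expMeasure l)
    (hpt : ∀ k, p k = fun _ => t)
    (μ : ℝ) (hDint : Integrable (D 0) P) (hμ : μ = ∫ ω, D 0 ω ∂P) :
    ∫⁻ ω, R ω ∂P = ENNReal.ofReal ((1 / l + μ) * (Real.exp (l * t) - 1)) := by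
  have hμ0 : 0 ≤ μ := hμ ▸ integral_nonneg (hDnn 0)
  obtain rfl : A = firstPassage U t := funext fun n => by simp [hA, hpt, firstPassage]
  simp only [hpt] at hR
  have hXm : ∀ e : ℕ × Fin 3, Measurable (![U e.1, D e.1, p e.1] e.2) := by
    rintro ⟨i, j⟩
    fin_cases j
    exacts [hUmeas i, hDmeas i, by simp [hpt]]
  have hDmean : ∀ k, ∫⁻ ω, ENNReal.ofReal (D k ω) ∂P = ENNReal.ofReal μ := fun k =>
    ((hDid k).comp ENNReal.measurable_ofReal).lintegral_eq.trans <| by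
      rw [hμ, ofReal_integral_eq_lintegral_ofReal hDint (ae_of_all _ (hDnn 0))]
      rfl
  have hterm : ∀ n, ∫⁻ ω in firstPassage U t n,
      ENNReal.ofReal (t + ∑ k ∈ Finset.range n, (U k ω + D k ω)) ∂P
      = ENNReal.ofReal ((t + n * (1 / l - t / (exp (l * t) - 1) + μ))
          * ((1 - exp (-(l * t))) ^ n * exp (-(l * t)))) :=
    setLIntegral_firstPassage_completionTime_expMeasure hindep hXm (u := 0) (d := 1) (by decide)
      hl ht hUexp hUnn hDnn hμ0 hDmean
  have hcover : P (⋃ n, firstPassage U t n)ᶜ = 0 :=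
    measure_compl_iUnion_firstPassage (hindep.precomp (Prod.mk_left_injective (0 : Fin 3)) :)
      hUmeas hUexp (by simp [expMeasure_Ici hl ht.le, exp_pos])
  have hFm : ∀ n, Measurable fun ω =>
      ENNReal.ofReal (t + ∑ k ∈ Finset.range n, (U k ω + D k ω)) := fun n =>
    (measurable_const.add (Finset.measurable_sum _ fun k _ =>
      (hUmeas k).add (hDmeas k))).ennreal_ofReal
  rw [lintegral_congr hR, lintegral_tsum_indicator_add_indicator_top
    (measurableSet_firstPassage hUmeas t) hFm hcover, tsum_congr hterm,
    tsum_ofReal_completionTime_expMeasure hl ht hμ0]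

/-- (Indices shifted to start at `0`: `U 0` is `U₁`, etc.)
If each uptime `U_k` is exponentially distributed with rate `l > 0`, each downtime
has finite mean `E[D₁] = μ`, and each processing time is the constant `t > 0`, then
`E[R] = (1/l + μ)·(e^{l·t} - 1)`. -/
theorem stmt11
    {Ω : Type*} [MeasurableSpace Ω] (P : Measure Ω) [IsProbabilityMeasure P]
    (U D p : ℕ → Ω → ℝ)
    (hUmeas : ∀ k, Measurable (U k)) (hDmeas : ∀ k, Measurable (D k))
    (hpmeas : ∀ k, Measurable (p k))
    (hUnn : ∀ k ω, 0 ≤ U k ω) (hDnn : ∀ k ω, 0 ≤ D k ω) (hpnn : ∀ k ω, 0 ≤ p k ω)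
    (hindep : iIndepFun
      (fun i : ℕ × Fin 3 => ![U i.1, D i.1, p i.1] i.2) P)
    (hUid : ∀ k, IdentDistrib (U k) (U 0) P P)
    (hDid : ∀ k, IdentDistrib (D k) (D 0) P P)
    (hpid : ∀ k, IdentDistrib (p k) (p 0) P P)
    (A : ℕ → Set Ω)
    (hA : ∀ n, A n = {ω | (∀ i < n, U i ω < p i ω) ∧ p n ω ≤ U n ω})
    (R : Ω → ℝ≥0∞)
    (hR : ∀ ω, R ω =
      (∑' n, Set.indicator (A n)
        (fun ω => ENNReal.ofReal (p n ω + ∑ k ∈ Finset.range n, (U k ω + D k ω))) ω)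
      + Set.indicator (⋃ n, A n)ᶜ (fun _ => (⊤ : ℝ≥0∞)) ω)
    (l t : ℝ) (hl : 0 < l) (ht : 0 < t)
    (hUexp : ∀ k, Measure.map (U k) P = expMeasure l)
    (hpt : ∀ k, p k = fun _ => t)
    (μ : ℝ) (hDint : Integrable (D 0) P) (hμ : μ = ∫ ω, D 0 ω ∂P) :
    ∫⁻ ω, R ω ∂P = ENNReal.ofReal ((1 / l + μ) * (Real.exp (l * t) - 1)) :=
  stmt11_general P U D p hUmeas hDmeas hUnn hDnn hindep hDid A hA R hR l t hl ht hUexp hpt μ hDint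
    hμ
end
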